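/- arXiv:2502.19325 — 7 statements merged into one kernel-verified Lean document; each statement's English description precedes it below -/
import Mathlib

section
/- (Lemma 1, PTW recursion) For every depth D ≥ 1, every t with 1 ≤ t ≤ 2^D, every e_{1:t} ∈ {0,1}^t and every a_{1:t} ∈ 𝒜^t, setting k := 2^{D−1}, one has PTW-KTE_D(e_{1:t} || a_{1:t}) = (1/2)·KTE(e_{1:t} || a_{1:t}) + (1/2)·PTW-KTE_{D−1}(e_{1:min(t,k)} || a_{1:min(t,k)})·PTW-KTE_{D−1}(e_{k+1:t} || a_{k+1:t}), where the last factor is defined to be 1 when t ≤ k, and PTW-KTE_0(e || a) := KTE(e || a). -/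
/-- The Beta function `B(a,b) = Γ(a)Γ(b)/Γ(a+b)`. -/
noncomputable def betaFn (a b : ℝ) : ℝ := Real.Gamma a * Real.Gamma b / Real.Gamma (a + b)

/-- The Krichevsky–Trofimov probability of a binary string with `z` zeros and `o` ones:
`KT(x) = (1/π) · B(z + 1/2, o + 1/2)`.  (The empty string gets probability 1.) -/
noncomputable def ktProb (z o : ℕ) : ℝ :=
  betaFn ((z : ℝ) + 1 / 2) ((o : ℝ) + 1 / 2) / Real.pi

/-- `KTE(e_{c:d} ‖ a_{c:d}) := ∏_{x ∈ 𝒜} KT(e^x_{c:d})` where `e^x_{c:d}` is the subsequence of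
the percepts `e_i`, `c ≤ i ≤ d`, with `a_i = x`. -/
noncomputable def kteSeg {α : Type*} [Fintype α] [DecidableEq α]
    (e : ℕ → Bool) (a : ℕ → α) (c d : ℕ) : ℝ :=
  ∏ x : α, ktProb
    (((Finset.Icc c d).filter fun i => a i = x ∧ e i = false).card)
    (((Finset.Icc c d).filter fun i => a i = x ∧ e i = true).card)

/-- `CD D t` is the set `C_D(t)` of binary temporal partitions of `{t, …, t + 2^D − 1}`:
`C_0(t) = {{(t,t)}}` and
`C_{D+1}(t) = {{(t, t+2^{D+1}−1)}} ∪ {S₁ ∪ S₂ : S₁ ∈ C_D(t), S₂ ∈ C_D(t + 2^D)}`. -/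
def CD : ℕ → ℕ → Finset (Finset (ℕ × ℕ))
  | 0, t => {{(t, t)}}
  | D + 1, t =>
      insert {(t, t + 2 ^ (D + 1) - 1)}
        ((CD D t ×ˢ CD D (t + 2 ^ D)).image fun p => p.1 ∪ p.2)

/-- The exponent `Γ_D(𝒫)`, defined recursively by `Γ_0({(t,t)}) = 0`,
`Γ_{D+1}({(t, t+2^{D+1}−1)}) = 1`, and `Γ_{D+1}(S₁ ∪ S₂) = 1 + Γ_D(S₁) + Γ_D(S₂)`
(the two halves `S₁, S₂` of a split partition are recovered by filtering). -/
def GammaD : ℕ → ℕ → Finset (ℕ × ℕ) → ℕ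
  | 0, _, _ => 0
  | D + 1, t, P =>
      if P = {(t, t + 2 ^ (D + 1) - 1)} then 1
      else 1 + GammaD D t (P.filter fun s => s.2 < t + 2 ^ D)
             + GammaD D (t + 2 ^ D) (P.filter fun s => t + 2 ^ D ≤ s.1)

/-- `PTW-KTE_D` started at time `t0`, evaluated on the data up to time `t`:
`Σ_{𝒫 ∈ C_D(t0)} 2^{−Γ_D(𝒫)} ∏_{(c,d) ∈ 𝒫, c ≤ t} KTE(e_{c:min(d,t)} ‖ a_{c:min(d,t)})`. -/
noncomputable def ptwKTE {α : Type*} [Fintype α] [DecidableEq α]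
    (D t0 : ℕ) (e : ℕ → Bool) (a : ℕ → α) (t : ℕ) : ℝ :=
  ∑ P ∈ CD D t0, (2 : ℝ) ^ (-(GammaD D t0 P : ℤ)) *
    ∏ s ∈ P.filter fun s => s.1 ≤ t, kteSeg e a s.1 (min s.2 t)

/-- The active segments at time `t`: segments containing `t` that belong to some binary
temporal partition in `C_D := C_D(1)`. -/
def ActiveSegments (D t : ℕ) : Set (ℕ × ℕ) :=
  {s : ℕ × ℕ | s.1 ≤ t ∧ t ≤ s.2 ∧ ∃ P ∈ CD D 1, s ∈ P}

/-! Removing the top split is a bijection from the non-trivial partitions in `C_{D+1}(t₀)` onto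
`C_D(t₀) × C_D(t₀ + 2^D)`; it turns the weight `2^{-Γ}` into `1/2` times the product of the
weights of the halves, and the product of KTE factors into the product over the halves. The
one-segment partition contributes the remaining `KTE/2`, so the recursion holds for every start
`t₀` and every time `t`. At `t₀ = 1` the left half no longer sees data after time `2^D`, and a
mixture started after `t` equals `1`: by the same recursion, because the KT probability of the
empty string is `Γ(1/2)²/π = 1`. -/

theorem ktProb_zero_zero : ktProb 0 0 = 1 := by
  simp only [ktProb, betaFn, Nat.cast_zero, zero_add]
  rw [add_halves, Real.Gamma_one, Real.Gamma_one_half_eq,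
    Real.mul_self_sqrt Real.pi_pos.le, div_one, div_self Real.pi_ne_zero]

theorem kteSeg_of_lt {α : Type*} [Fintype α] [DecidableEq α]
    (e : ℕ → Bool) (a : ℕ → α) {c d : ℕ} (h : d < c) : kteSeg e a c d = 1 := by
  simp [kteSeg, Finset.Icc_eq_empty_of_lt h, ktProb_zero_zero]

namespace CD

theorem bounds {D t0 : ℕ} {P : Finset (ℕ × ℕ)} (hP : P ∈ CD D t0) {s : ℕ × ℕ} (hs : s ∈ P) :
    t0 ≤ s.1 ∧ s.1 ≤ s.2 ∧ s.2 < t0 + 2 ^ D := by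
  induction D generalizing t0 P with
  | zero =>
    simp only [CD, Finset.mem_singleton] at hP
    subst hP
    simp only [Finset.mem_singleton] at hs
    subst hs
    simp
  | succ D ih =>
    have hpow : (2:ℕ) ^ (D + 1) = 2 ^ D + 2 ^ D := by ring
    have hpos : 0 < 2 ^ D := Nat.two_pow_pos D
    simp only [CD, Finset.mem_insert, Finset.mem_image, Finset.mem_product] at hP
    rcases hP with rfl | ⟨⟨S₁, S₂⟩, ⟨hS₁, hS₂⟩, rfl⟩
    · rw [Finset.mem_singleton] at hs
      subst hs
      simp only
      omega
    · rcases Finset.mem_union.1 hs with h | h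
      · have := ih hS₁ h
        omega
      · have := ih hS₂ h
        omega

variable {D t0 : ℕ} {S₁ S₂ : Finset (ℕ × ℕ)}

theorem filter_union_left (h₁ : S₁ ∈ CD D t0) (h₂ : S₂ ∈ CD D (t0 + 2 ^ D)) :
    ((S₁ ∪ S₂).filter fun s => s.2 < t0 + 2 ^ D) = S₁ := by
  ext s
  simp only [Finset.mem_filter, Finset.mem_union]
  constructor
  · rintro ⟨h | h, hlt⟩
    · exact h
    · have := bounds h₂ h
      omega
  · intro h
    exact ⟨Or.inl h, (bounds h₁ h).2.2⟩

theorem filter_union_right (h₁ : S₁ ∈ CD D t0) (h₂ : S₂ ∈ CD D (t0 + 2 ^ D)) :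
    ((S₁ ∪ S₂).filter fun s => t0 + 2 ^ D ≤ s.1) = S₂ := by
  ext s
  simp only [Finset.mem_filter, Finset.mem_union]
  constructor
  · rintro ⟨h | h, hle⟩
    · have := bounds h₁ h
      omega
    · exact h
  · intro h
    exact ⟨Or.inr h, (bounds h₂ h).1⟩

theorem disjoint (h₁ : S₁ ∈ CD D t0) (h₂ : S₂ ∈ CD D (t0 + 2 ^ D)) : Disjoint S₁ S₂ :=
  Finset.disjoint_left.2 fun s hs₁ hs₂ => by
    have := bounds h₁ hs₁
    have := bounds h₂ hs₂
    omega

theorem union_ne_singleton (h₁ : S₁ ∈ CD D t0) (h₂ : S₂ ∈ CD D (t0 + 2 ^ D)) :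
    S₁ ∪ S₂ ≠ {(t0, t0 + 2 ^ (D + 1) - 1)} := by
  intro h
  have hmem : (t0, t0 + 2 ^ (D + 1) - 1) ∈ S₁ ∪ S₂ := h ▸ Finset.mem_singleton_self _
  have hpow : (2:ℕ) ^ (D + 1) = 2 ^ D + 2 ^ D := by ring
  have hpos : 0 < 2 ^ D := Nat.two_pow_pos D
  rcases Finset.mem_union.1 hmem with h | h
  · have := bounds h₁ h
    simp only at this
    omega
  · have := bounds h₂ h
    simp only at this
    omega

theorem sum_succ (f : Finset (ℕ × ℕ) → ℝ) :
    ∑ P ∈ CD (D + 1) t0, f P =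
      f {(t0, t0 + 2 ^ (D + 1) - 1)} +
        ∑ S₁ ∈ CD D t0, ∑ S₂ ∈ CD D (t0 + 2 ^ D), f (S₁ ∪ S₂) := by
  rw [CD, Finset.sum_insert]
  · rw [Finset.sum_image, Finset.sum_product]
    rintro ⟨S₁, S₂⟩ hS ⟨T₁, T₂⟩ hT h
    simp only [Finset.coe_product, Set.mem_prod, Finset.mem_coe] at hS hT h
    rw [Prod.mk.injEq]
    exact ⟨by rw [← filter_union_left hS.1 hS.2, h, filter_union_left hT.1 hT.2],
      by rw [← filter_union_right hS.1 hS.2, h, filter_union_right hT.1 hT.2]⟩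
  · simp only [Finset.mem_image, Finset.mem_product, not_exists, not_and]
    rintro ⟨S₁, S₂⟩ ⟨h₁, h₂⟩
    exact union_ne_singleton h₁ h₂

end CD

theorem GammaD_succ_singleton (D t0 : ℕ) :
    GammaD (D + 1) t0 {(t0, t0 + 2 ^ (D + 1) - 1)} = 1 := by
  rw [GammaD, if_pos rfl]

theorem two_zpow_neg_GammaD_succ_union {D t0 : ℕ} {S₁ S₂ : Finset (ℕ × ℕ)}
    (h₁ : S₁ ∈ CD D t0) (h₂ : S₂ ∈ CD D (t0 + 2 ^ D)) :
    (2:ℝ) ^ (-(GammaD (D + 1) t0 (S₁ ∪ S₂) : ℤ)) =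
      1 / 2 * (2:ℝ) ^ (-(GammaD D t0 S₁ : ℤ)) * (2:ℝ) ^ (-(GammaD D (t0 + 2 ^ D) S₂ : ℤ)) := by
  rw [GammaD, if_neg (CD.union_ne_singleton h₁ h₂), CD.filter_union_left h₁ h₂,
    CD.filter_union_right h₁ h₂]
  push_cast
  rw [neg_add, neg_add, zpow_add₀ two_ne_zero, zpow_add₀ two_ne_zero, zpow_neg_one, one_div]

section ptwKTE

variable {α : Type*} [Fintype α] [DecidableEq α] (e : ℕ → Bool) (a : ℕ → α)

theorem ptwKTE_succ (D t0 t : ℕ) :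
    ptwKTE (D + 1) t0 e a t =
      1 / 2 * kteSeg e a t0 (min (t0 + 2 ^ (D + 1) - 1) t) +
        1 / 2 * ptwKTE D t0 e a t * ptwKTE D (t0 + 2 ^ D) e a t := by
  have hsplit : ∀ S₁ ∈ CD D t0, ∀ S₂ ∈ CD D (t0 + 2 ^ D),
      ∏ s ∈ (S₁ ∪ S₂).filter (fun s => s.1 ≤ t), kteSeg e a s.1 (min s.2 t) =
        (∏ s ∈ S₁.filter (fun s => s.1 ≤ t), kteSeg e a s.1 (min s.2 t)) *
          ∏ s ∈ S₂.filter (fun s => s.1 ≤ t), kteSeg e a s.1 (min s.2 t) := fun S₁ h₁ S₂ h₂ => by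
    rw [Finset.filter_union,
      Finset.prod_union (Finset.disjoint_filter_filter (CD.disjoint h₁ h₂))]
  have hwhole : ∏ s ∈ ({(t0, t0 + 2 ^ (D + 1) - 1)} : Finset (ℕ × ℕ)).filter (fun s => s.1 ≤ t),
      kteSeg e a s.1 (min s.2 t) = kteSeg e a t0 (min (t0 + 2 ^ (D + 1) - 1) t) := by
    rw [Finset.filter_singleton]
    split_ifs with h
    · rw [Finset.prod_singleton]
    · rw [Finset.prod_empty, kteSeg_of_lt e a (by omega)]
  unfold ptwKTE
  rw [CD.sum_succ, GammaD_succ_singleton, hwhole, mul_assoc (1 / 2 : ℝ), Finset.sum_mul_sum,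
    Finset.mul_sum]
  congr 1
  · norm_num
  · refine Finset.sum_congr rfl fun S₁ h₁ => ?_
    rw [Finset.mul_sum]
    refine Finset.sum_congr rfl fun S₂ h₂ => ?_
    rw [two_zpow_neg_GammaD_succ_union h₁ h₂, hsplit S₁ h₁ S₂ h₂]
    ring

theorem ptwKTE_of_lt (D : ℕ) {t0 t : ℕ} (h : t < t0) : ptwKTE D t0 e a t = 1 := by
  induction D generalizing t0 with
  | zero => simp [ptwKTE, CD, GammaD, Finset.filter_singleton, not_le.2 h]
  | succ D ih =>
    rw [ptwKTE_succ, kteSeg_of_lt e a ((min_le_right _ t).trans_lt h), ih h,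
      ih (h.trans_le (Nat.le_add_right t0 (2 ^ D)))]
    norm_num

theorem ptwKTE_eq_of_le (D t0 : ℕ) {t t' : ℕ} (h₁ : t0 + 2 ^ D - 1 ≤ t') (h₂ : t' ≤ t) :
    ptwKTE D t0 e a t = ptwKTE D t0 e a t' := by
  refine Finset.sum_congr rfl fun P hP => ?_
  have hall : ∀ u, t0 + 2 ^ D - 1 ≤ u → P.filter (fun s => s.1 ≤ u) = P := fun u hu =>
    Finset.filter_true_of_mem fun s hs => by
      have := CD.bounds hP hs
      omega
  rw [hall t (h₁.trans h₂), hall t' h₁]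
  congr 1
  refine Finset.prod_congr rfl fun s hs => ?_
  have := CD.bounds hP hs
  rw [min_eq_left (by omega), min_eq_left (by omega)]

end ptwKTE

theorem ptw_kte_recursion_general {α : Type*} [Fintype α] [DecidableEq α]
    (D : ℕ) (hD : 1 ≤ D) (t : ℕ) (ht2 : t ≤ 2 ^ D)
    (e : ℕ → Bool) (a : ℕ → α) :
    ptwKTE D 1 e a t =
      1 / 2 * kteSeg e a 1 t +
      1 / 2 * ptwKTE (D - 1) 1 e a (min t (2 ^ (D - 1))) *
        (if t ≤ 2 ^ (D - 1) then 1 else ptwKTE (D - 1) (2 ^ (D - 1) + 1) e a t) := by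
  obtain ⟨D, rfl⟩ : ∃ D', D = D' + 1 := ⟨D - 1, by omega⟩
  rw [Nat.add_sub_cancel, ptwKTE_succ, min_eq_right (by omega), Nat.add_comm 1]
  have hleft : ptwKTE D 1 e a t = ptwKTE D 1 e a (min t (2 ^ D)) := by
    rcases le_total t (2 ^ D) with h | h
    · rw [min_eq_left h]
    · rw [min_eq_right h]
      exact ptwKTE_eq_of_le e a D 1 (by omega) h
  split_ifs with h
  · rw [hleft, ptwKTE_of_lt e a D (t0 := 2 ^ D + 1) (by omega)]
  · rw [hleft]

/-- **Lemma 1 (PTW recursion).** For every depth `D ≥ 1` and every `1 ≤ t ≤ 2^D`, with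
`k := 2^{D−1}`,
`PTW-KTE_D(e_{1:t}‖a_{1:t}) = (1/2)·KTE(e_{1:t}‖a_{1:t})
  + (1/2)·PTW-KTE_{D−1}(e_{1:min(t,k)}‖a_{1:min(t,k)})·PTW-KTE_{D−1}(e_{k+1:t}‖a_{k+1:t})`,
where the last factor (the mixture over `C_{D−1}(k+1)`) is defined to be `1` when `t ≤ k`. -/
theorem ptw_kte_recursion {α : Type*} [Fintype α] [DecidableEq α]
    (D : ℕ) (hD : 1 ≤ D) (t : ℕ) (ht1 : 1 ≤ t) (ht2 : t ≤ 2 ^ D)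
    (e : ℕ → Bool) (a : ℕ → α) :
    ptwKTE D 1 e a t =
      1 / 2 * kteSeg e a 1 t +
      1 / 2 * ptwKTE (D - 1) 1 e a (min t (2 ^ (D - 1))) *
        (if t ≤ 2 ^ (D - 1) then 1 else ptwKTE (D - 1) (2 ^ (D - 1) + 1) e a t) :=
  ptw_kte_recursion_general D hD t ht2 e a
end

section
/- (γ-generalised PTW recursion) Fix γ ∈ (0,1). Define the γ-weighted mixture PTW-KTE^γ_D(e_{1:t} || a_{1:t}) := Σ_{𝒫 ∈ C_D} ω_D(𝒫) ∏_{(c,d) ∈ 𝒫, c ≤ t} KTE(e_{c:min(d,t)} || a_{c:min(d,t)}), where ω_0({(t,t)}) := 1, ω_D({(t,t+2^D−1)}) := γ for D ≥ 1, and ω_D(S₁ ∪ S₂) := (1−γ)·ω_{D−1}(S₁)·ω_{D−1}(S₂). Then for every D ≥ 1 and 1 ≤ t ≤ 2^D, with k := 2^{D−1}, PTW-KTE^γ_D(e_{1:t} || a_{1:t}) = γ·KTE(e_{1:t} || a_{1:t}) + (1−γ)·PTW-KTE^γ_{D−1}(e_{1:min(t,k)} || a_{1:min(t,k)})·PTW-KTE^γ_{D−1}(e_{k+1:t}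 || a_{k+1:t}), where the last factor is 1 when t ≤ k and PTW-KTE^γ_0(e || a) := KTE(e || a). -/
/-- The γ-weight `ω_D(𝒫)` over binary temporal partitions, defined recursively by
`ω_0({(t,t)}) = 1`, `ω_{D+1}({(t,t+2^{D+1}−1)}) = γ`, and
`ω_{D+1}(S₁ ∪ S₂) = (1−γ)·ω_D(S₁)·ω_D(S₂)` (the halves are recovered by filtering). -/
noncomputable def omegaWt (γ : ℝ) : ℕ → ℕ → Finset (ℕ × ℕ) → ℝ
  | 0, _, _ => 1
  | D + 1, t, P =>
      if P = {(t, t + 2 ^ (D + 1) - 1)} then γ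
      else (1 - γ) * omegaWt γ D t (P.filter fun s => s.2 < t + 2 ^ D)
             * omegaWt γ D (t + 2 ^ D) (P.filter fun s => t + 2 ^ D ≤ s.1)

/-- The γ-weighted mixture
`PTW-KTE^γ_D(e‖a) := Σ_{𝒫 ∈ C_D(t0)} ω_D(𝒫) ∏_{(c,d) ∈ 𝒫, c ≤ t} KTE(e_{c:min(d,t)} ‖ a_{c:min(d,t)})`. -/
noncomputable def ptwKTEγ {α : Type*} [Fintype α] [DecidableEq α]
    (γ : ℝ) (D t0 : ℕ) (e : ℕ → Bool) (a : ℕ → α) (t : ℕ) : ℝ :=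
  ∑ P ∈ CD D t0, omegaWt γ D t0 P *
    ∏ s ∈ P.filter fun s => s.1 ≤ t, kteSeg e a s.1 (min s.2 t)

/-!
`C_{D+1}(t₀)` is the trivial partition together with the unions `S₁ ∪ S₂` of partitions of the
two halves, and this union is injective because each half is recovered by filtering. On a union
both the weight `ω` and the product of the segment probabilities factor, so the mixture splits as
`γ · KTE + (1 − γ) · (left mixture) · (right mixture)`. Up to time `t ≤ 2^D` the left mixture
only sees data up to `min t k`, and when `t ≤ k` no segment of the right half has started, so
the right mixture is the total weight `Σ ω = 1`.
-/

open Finset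

noncomputable def partitionKTE {α : Type*} [Fintype α] [DecidableEq α]
    (e : ℕ → Bool) (a : ℕ → α) (P : Finset (ℕ × ℕ)) (t : ℕ) : ℝ :=
  ∏ s ∈ P.filter fun s => s.1 ≤ t, kteSeg e a s.1 (min s.2 t)

section Partitions

lemma CD_succ (D t₀ : ℕ) :
    CD (D + 1) t₀ = insert {(t₀, t₀ + 2 ^ (D + 1) - 1)}
      ((CD D t₀ ×ˢ CD D (t₀ + 2 ^ D)).image fun p => p.1 ∪ p.2) :=
  rfl

lemma bounds_of_mem_CD {D t₀ : ℕ} {P : Finset (ℕ × ℕ)} (hP : P ∈ CD D t₀) {s : ℕ × ℕ}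
    (hs : s ∈ P) : t₀ ≤ s.1 ∧ s.1 ≤ s.2 ∧ s.2 < t₀ + 2 ^ D := by
  induction D generalizing t₀ P with
  | zero =>
    simp only [CD, mem_singleton] at hP
    subst hP
    rw [mem_singleton.mp hs]
    simp
  | succ D ih =>
    have hpow : 2 ^ (D + 1) = 2 ^ D + 2 ^ D := by ring
    have hpos : 0 < 2 ^ D := Nat.two_pow_pos D
    rw [CD_succ, mem_insert, mem_image] at hP
    rcases hP with rfl | ⟨⟨S₁, S₂⟩, hS, rfl⟩
    · rw [mem_singleton.mp hs]
      simp only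
      omega
    · rw [mem_product] at hS
      rcases mem_union.mp hs with h | h
      · have := ih hS.1 h
        omega
      · have := ih hS.2 h
        omega

lemma nonempty_of_mem_CD {D t₀ : ℕ} {P : Finset (ℕ × ℕ)} (hP : P ∈ CD D t₀) : P.Nonempty := by
  induction D generalizing t₀ P with
  | zero =>
    simp only [CD, mem_singleton] at hP
    simp [hP]
  | succ D ih =>
    rw [CD_succ, mem_insert, mem_image] at hP
    rcases hP with rfl | ⟨⟨S₁, S₂⟩, hS, rfl⟩
    · simp
    · exact (ih (mem_product.mp hS).1).mono subset_union_left

variable {D t₀ : ℕ} {S₁ S₂ : Finset (ℕ × ℕ)}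

lemma filter_union_CD_left (h₁ : S₁ ∈ CD D t₀) (h₂ : S₂ ∈ CD D (t₀ + 2 ^ D)) :
    (S₁ ∪ S₂).filter (fun s => s.2 < t₀ + 2 ^ D) = S₁ := by
  ext s
  simp only [mem_filter, mem_union]
  constructor
  · rintro ⟨h | h, hlt⟩
    · exact h
    · have := bounds_of_mem_CD h₂ h
      omega
  · exact fun h => ⟨Or.inl h, (bounds_of_mem_CD h₁ h).2.2⟩

lemma filter_union_CD_right (h₁ : S₁ ∈ CD D t₀) (h₂ : S₂ ∈ CD D (t₀ + 2 ^ D)) :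
    (S₁ ∪ S₂).filter (fun s => t₀ + 2 ^ D ≤ s.1) = S₂ := by
  ext s
  simp only [mem_filter, mem_union]
  constructor
  · rintro ⟨h | h, hle⟩
    · have := bounds_of_mem_CD h₁ h
      omega
    · exact h
  · exact fun h => ⟨Or.inr h, (bounds_of_mem_CD h₂ h).1⟩

lemma disjoint_of_mem_CD (h₁ : S₁ ∈ CD D t₀) (h₂ : S₂ ∈ CD D (t₀ + 2 ^ D)) :
    Disjoint S₁ S₂ :=
  disjoint_left.mpr fun s hs₁ hs₂ => by
    have := bounds_of_mem_CD h₁ hs₁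
    have := bounds_of_mem_CD h₂ hs₂
    omega

lemma union_CD_ne_singleton (h₂ : S₂ ∈ CD D (t₀ + 2 ^ D)) :
    S₁ ∪ S₂ ≠ {(t₀, t₀ + 2 ^ (D + 1) - 1)} := by
  intro h
  obtain ⟨s, hs⟩ := nonempty_of_mem_CD h₂
  have hs' : s ∈ S₁ ∪ S₂ := mem_union_right _ hs
  rw [h, mem_singleton] at hs'
  have hfst : t₀ + 2 ^ D ≤ t₀ := by simpa [hs'] using (bounds_of_mem_CD h₂ hs).1
  have : 0 < 2 ^ D := Nat.two_pow_pos D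
  omega

end Partitions

lemma sum_CD_succ {M : Type*} [AddCommMonoid M] (f : Finset (ℕ × ℕ) → M) (D t₀ : ℕ) :
    ∑ P ∈ CD (D + 1) t₀, f P = f {(t₀, t₀ + 2 ^ (D + 1) - 1)} +
      ∑ S₁ ∈ CD D t₀, ∑ S₂ ∈ CD D (t₀ + 2 ^ D), f (S₁ ∪ S₂) := by
  have hinj : Set.InjOn (fun p : Finset (ℕ × ℕ) × Finset (ℕ × ℕ) => p.1 ∪ p.2)
      ↑(CD D t₀ ×ˢ CD D (t₀ + 2 ^ D)) := by
    rintro ⟨S₁, S₂⟩ hS ⟨T₁, T₂⟩ hT h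
    simp only [coe_product, Set.mem_prod, mem_coe] at hS hT h
    refine Prod.ext ?_ ?_
    · rw [← filter_union_CD_left hS.1 hS.2, ← filter_union_CD_left hT.1 hT.2, h]
    · rw [← filter_union_CD_right hS.1 hS.2, ← filter_union_CD_right hT.1 hT.2, h]
  have hnotMem : {(t₀, t₀ + 2 ^ (D + 1) - 1)} ∉
      (CD D t₀ ×ˢ CD D (t₀ + 2 ^ D)).image fun p => p.1 ∪ p.2 := by
    intro hmem
    obtain ⟨⟨S₁, S₂⟩, hS, h⟩ := mem_image.mp hmem
    rw [mem_product] at hS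
    exact union_CD_ne_singleton hS.2 h
  rw [CD_succ, sum_insert hnotMem, sum_image hinj, sum_product]

section Weights

variable (γ : ℝ)

lemma omegaWt_succ_singleton (D t₀ : ℕ) :
    omegaWt γ (D + 1) t₀ {(t₀, t₀ + 2 ^ (D + 1) - 1)} = γ :=
  if_pos rfl

lemma omegaWt_succ_union {D t₀ : ℕ} {S₁ S₂ : Finset (ℕ × ℕ)} (h₁ : S₁ ∈ CD D t₀)
    (h₂ : S₂ ∈ CD D (t₀ + 2 ^ D)) :
    omegaWt γ (D + 1) t₀ (S₁ ∪ S₂) = (1 - γ) * omegaWt γ D t₀ S₁ * omegaWt γ D (t₀ + 2 ^ D) S₂ := by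
  rw [omegaWt, if_neg (union_CD_ne_singleton h₂), filter_union_CD_left h₁ h₂,
    filter_union_CD_right h₁ h₂]

lemma sum_omegaWt (D t₀ : ℕ) : ∑ P ∈ CD D t₀, omegaWt γ D t₀ P = 1 := by
  induction D generalizing t₀ with
  | zero => simp [CD, omegaWt]
  | succ D ih =>
    rw [sum_CD_succ, omegaWt_succ_singleton]
    calc γ + ∑ S₁ ∈ CD D t₀, ∑ S₂ ∈ CD D (t₀ + 2 ^ D), omegaWt γ (D + 1) t₀ (S₁ ∪ S₂)
        = γ + (1 - γ) * (∑ S₁ ∈ CD D t₀, omegaWt γ D t₀ S₁) *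
            ∑ S₂ ∈ CD D (t₀ + 2 ^ D), omegaWt γ D (t₀ + 2 ^ D) S₂ := by
          rw [mul_assoc, sum_mul_sum, mul_sum]
          refine congrArg _ (sum_congr rfl fun S₁ h₁ => ?_)
          rw [mul_sum]
          refine sum_congr rfl fun S₂ h₂ => ?_
          rw [omegaWt_succ_union γ h₁ h₂, mul_assoc]
      _ = 1 := by rw [ih, ih]; ring

end Weights

section KTE

variable {α : Type*} [Fintype α] [DecidableEq α] (e : ℕ → Bool) (a : ℕ → α)

lemma partitionKTE_union {S₁ S₂ : Finset (ℕ × ℕ)} (h : Disjoint S₁ S₂) (t : ℕ) :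
    partitionKTE e a (S₁ ∪ S₂) t = partitionKTE e a S₁ t * partitionKTE e a S₂ t := by
  rw [partitionKTE, filter_union, prod_union (disjoint_filter_filter h)]
  rfl

lemma partitionKTE_singleton {c d t : ℕ} (hct : c ≤ t) (htd : t ≤ d) :
    partitionKTE e a {(c, d)} t = kteSeg e a c t := by
  rw [partitionKTE, filter_singleton, if_pos hct, prod_singleton, min_eq_right htd]

lemma partitionKTE_of_lt_fst {P : Finset (ℕ × ℕ)} {t : ℕ} (h : ∀ s ∈ P, t < s.1) :
    partitionKTE e a P t = 1 := by
  rw [partitionKTE, filter_false_of_mem fun s hs => not_le.mpr (h s hs), prod_empty]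

lemma partitionKTE_min {P : Finset (ℕ × ℕ)} {u : ℕ} (h : ∀ s ∈ P, s.1 ≤ s.2 ∧ s.2 ≤ u) (t : ℕ) :
    partitionKTE e a P (min t u) = partitionKTE e a P t := by
  have hfilter : P.filter (fun s => s.1 ≤ min t u) = P.filter (fun s => s.1 ≤ t) :=
    filter_congr fun s hs => by have := h s hs; omega
  rw [partitionKTE, partitionKTE, hfilter]
  exact prod_congr rfl fun s hs => by
    have := h s (mem_filter.mp hs).1
    rw [show min s.2 (min t u) = min s.2 t by omega]

lemma ptwKTEγ_eq_sum (γ : ℝ) (D t₀ t : ℕ) :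
    ptwKTEγ γ D t₀ e a t = ∑ P ∈ CD D t₀, omegaWt γ D t₀ P * partitionKTE e a P t :=
  rfl

lemma ptwKTEγ_of_lt (γ : ℝ) (D : ℕ) {t₀ t : ℕ} (h : t < t₀) : ptwKTEγ γ D t₀ e a t = 1 := by
  rw [ptwKTEγ_eq_sum, ← sum_omegaWt γ D t₀]
  refine sum_congr rfl fun P hP => ?_
  rw [partitionKTE_of_lt_fst e a fun s hs => h.trans_le (bounds_of_mem_CD hP hs).1, mul_one]

lemma ptwKTEγ_min (γ : ℝ) (D : ℕ) {t₀ u : ℕ} (h : t₀ + 2 ^ D ≤ u + 1) (t : ℕ) :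
    ptwKTEγ γ D t₀ e a (min t u) = ptwKTEγ γ D t₀ e a t := by
  simp only [ptwKTEγ_eq_sum]
  refine sum_congr rfl fun P hP => ?_
  rw [partitionKTE_min e a fun s hs => by have := bounds_of_mem_CD hP hs; omega]

lemma ptwKTEγ_succ (γ : ℝ) (D t₀ t : ℕ) :
    ptwKTEγ γ (D + 1) t₀ e a t =
      γ * partitionKTE e a {(t₀, t₀ + 2 ^ (D + 1) - 1)} t +
        (1 - γ) * ptwKTEγ γ D t₀ e a t * ptwKTEγ γ D (t₀ + 2 ^ D) e a t := by
  simp only [ptwKTEγ_eq_sum]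
  rw [sum_CD_succ, omegaWt_succ_singleton, mul_assoc, sum_mul_sum, mul_sum]
  refine congrArg _ (sum_congr rfl fun S₁ h₁ => ?_)
  rw [mul_sum]
  refine sum_congr rfl fun S₂ h₂ => ?_
  rw [omegaWt_succ_union γ h₁ h₂, partitionKTE_union e a (disjoint_of_mem_CD h₁ h₂)]
  ring

end KTE

theorem ptw_kte_gamma_recursion_general {α : Type*} [Fintype α] [DecidableEq α]
    (γ : ℝ)
    (D : ℕ) (hD : 1 ≤ D) (t : ℕ) (ht1 : 1 ≤ t) (ht2 : t ≤ 2 ^ D)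
    (e : ℕ → Bool) (a : ℕ → α) :
    ptwKTEγ γ D 1 e a t =
      γ * kteSeg e a 1 t +
      (1 - γ) * ptwKTEγ γ (D - 1) 1 e a (min t (2 ^ (D - 1))) *
        (if t ≤ 2 ^ (D - 1) then 1 else ptwKTEγ γ (D - 1) (2 ^ (D - 1) + 1) e a t) := by
  obtain ⟨D, rfl⟩ : ∃ D', D = D' + 1 := ⟨D - 1, by omega⟩
  rw [Nat.add_sub_cancel, ptwKTEγ_succ,
    partitionKTE_singleton e a ht1 (by rw [pow_succ] at ht2; omega),
    ptwKTEγ_min e a γ D (u := 2 ^ D) (by omega)]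
  split_ifs with ht
  · rw [ptwKTEγ_of_lt e a γ D (t₀ := 1 + 2 ^ D) (by omega)]
  · rw [add_comm (2 ^ D) 1]

/-- **γ-generalised PTW recursion.** For `γ ∈ (0,1)`, every `D ≥ 1` and `1 ≤ t ≤ 2^D`, with
`k := 2^{D−1}`,
`PTW-KTE^γ_D(e_{1:t}‖a_{1:t}) = γ·KTE(e_{1:t}‖a_{1:t})
  + (1−γ)·PTW-KTE^γ_{D−1}(e_{1:min(t,k)}‖a_{1:min(t,k)})·PTW-KTE^γ_{D−1}(e_{k+1:t}‖a_{k+1:t})`,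
where the last factor is `1` when `t ≤ k`. -/
theorem ptw_kte_gamma_recursion {α : Type*} [Fintype α] [DecidableEq α]
    (γ : ℝ) (hγ : γ ∈ Set.Ioo (0 : ℝ) 1)
    (D : ℕ) (hD : 1 ≤ D) (t : ℕ) (ht1 : 1 ≤ t) (ht2 : t ≤ 2 ^ D)
    (e : ℕ → Bool) (a : ℕ → α) :
    ptwKTEγ γ D 1 e a t =
      γ * kteSeg e a 1 t +
      (1 - γ) * ptwKTEγ γ (D - 1) 1 e a (min t (2 ^ (D - 1))) *
        (if t ≤ 2 ^ (D - 1) then 1 else ptwKTEγ γ (D - 1) (2 ^ (D - 1) + 1) e a t) :=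
  ptw_kte_gamma_recursion_general γ D hD t ht1 ht2 e a
end

section
/- (Beta function lower bound) For all real a, b ≥ 1, the Beta function satisfies B(a+1, b+1) ≥ [1.6·√(ab) / (a+b)^{3/2}] · e^{−(a+b)·H(θ̂)}, where θ̂ := a/(a+b) and H(p) := −p·ln p − (1−p)·ln(1−p) is the binary entropy. -/
noncomputable def entBin (p : ℝ) : ℝ := -p * Real.log p - (1 - p) * Real.log (1 - p)

open Real Filter Topology Set

/-!
Let `μ(x) = log Γ(x + 1) - (x + 1/2) log x + x - log (2π) / 2` be the remainder in Stirling's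
formula. With `n = a + b`, the entropy term cancels the leading Stirling terms exactly, and the
claim becomes `log 1.6 + log (1 + 1/n) + μ(n) ≤ μ(a) + μ(b) + log (2π) / 2`.

Both `μ(a)` and `μ(b)` are non-negative: `μ` decreases along `x ↦ x + 1`, because
`(x + 1/2) log (1 + 1/x) ≥ 1`, and log-convexity of `Γ` together with Stirling's lower bound for
`k!` bounds `μ(x + k)` from below by a quantity tending to `0`.
For the upper bound at `n ≥ 2`, the same monotonicity moves `n` into `[2, 3]`; there
`log Γ(v + 1)` lies below its chord on `[3, 4]`, and the resulting explicit majorant decreases on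
`[2, 3]` and is small enough at `v = 2`.
-/

noncomputable def stirlingRemainder (x : ℝ) : ℝ :=
  log (Gamma (x + 1)) + x - (x + 1 / 2) * log x - log (2 * π) / 2

lemma log_Gamma_add_one_eq (x : ℝ) :
    log (Gamma (x + 1)) = (x + 1 / 2) * log x - x + log (2 * π) / 2 + stirlingRemainder x := by
  unfold stirlingRemainder
  ring

lemma log_Gamma_add_one {x : ℝ} (hx : 0 < x) :
    log (Gamma (x + 1)) = log (Gamma x) + log x := by
  rw [Gamma_add_one hx.ne', log_mul hx.ne' (Gamma_pos_of_pos hx).ne', add_comm]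

lemma stirlingRemainder_add_one_le {x : ℝ} (hx : 0 < x) :
    stirlingRemainder (x + 1) ≤ stirlingRemainder x := by
  have hlog : log (x + 1) = log x + log (1 + 1 / x) := by
    rw [← log_mul hx.ne' (by positivity)]
    congr 1
    field_simp
  have key : 1 ≤ (x + 1 / 2) * log (1 + 1 / x) := by
    have := le_log_one_add_of_nonneg (one_div_nonneg.2 hx.le)
    rwa [show 2 * (1 / x) / (1 / x + 2) = 1 / (x + 1 / 2) by field_simp; ring,
      div_le_iff₀' (by positivity)] at this
  unfold stirlingRemainder
  rw [log_Gamma_add_one (by positivity : 0 < x + 1), hlog]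
  nlinarith

lemma stirlingRemainder_add_nat_le {x : ℝ} (hx : 0 < x) (k : ℕ) :
    stirlingRemainder (x + k) ≤ stirlingRemainder x := by
  induction k with
  | zero => simp
  | succ k ih =>
    rw [Nat.cast_succ, ← add_assoc]
    exact (stirlingRemainder_add_one_le (by positivity)).trans ih

lemma neg_mul_log_one_add_div_le_stirlingRemainder_add_nat {x : ℝ} (hx : 0 < x) {k : ℕ}
    (hk : k ≠ 0) :
    -((x + 1 / 2) * log (1 + x / k)) ≤ stirlingRemainder (x + k) := by
  have hk0 : (0 : ℝ) < k := by positivity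
  have hGamma : log (k.factorial : ℝ) + x * log k ≤ log (Gamma (x + k + 1)) := by
    have := BohrMollerup.f_add_nat_ge convexOn_log_Gamma (fun hy ↦ log_Gamma_add_one hy)
      (n := k + 1) (by omega) hx
    simpa [Gamma_nat_eq_factorial, add_assoc, add_comm] using this
  have hsplit : log (x + k) = log k + log (1 + x / k) := by
    rw [← log_mul hk0.ne' (by positivity)]
    congr 1
    field_simp
    ring
  have hlog : k * log (1 + x / k) ≤ x := by
    have := log_le_sub_one_of_pos (show 0 < 1 + x / k by positivity)
    rw [← le_div_iff₀' hk0]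
    linarith
  have hstirling := Stirling.le_log_factorial_stirling hk
  unfold stirlingRemainder
  rw [hsplit]
  nlinarith

lemma stirlingRemainder_nonneg {x : ℝ} (hx : 0 < x) : 0 ≤ stirlingRemainder x := by
  have hlim : Tendsto (fun k : ℕ ↦ -((x + 1 / 2) * log (1 + x / k))) atTop (𝓝 0) := by
    have h := (tendsto_const_div_atTop_nhds_zero_nat x).const_add 1
    simpa using ((h.log (by norm_num)).const_mul (x + 1 / 2)).neg
  refine le_of_tendsto hlim ?_
  filter_upwards [eventually_ne_atTop 0] with k hk
  exact (neg_mul_log_one_add_div_le_stirlingRemainder_add_nat hx hk).trans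
    (stirlingRemainder_add_nat_le hx k)

lemma log_Gamma_add_one_le_of_mem_Icc {v : ℝ} (hv : v ∈ Icc (2 : ℝ) 3) :
    log (Gamma (v + 1)) ≤ log 2 + (v - 2) * log 3 := by
  have hΓ3 : log (Gamma 3) = log 2 := by
    rw [show (3 : ℝ) = (2 : ℕ) + 1 by norm_num, Gamma_nat_eq_factorial]
    norm_num
  rcases hv.1.eq_or_lt with rfl | hv2
  · norm_num [hΓ3]
  have := BohrMollerup.f_add_nat_le convexOn_log_Gamma (fun hy ↦ log_Gamma_add_one hy)
    (n := 3) (x := v - 2) (by norm_num) (by linarith) (by linarith [hv.2])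
  simp only [Function.comp_apply, Nat.cast_ofNat, hΓ3] at this
  convert this using 3; ring

/-- `log (1 + 1/v) + μ(v)` with `log Γ(v + 1)` replaced by its chord on `[3, 4]`, up to the
constant `log 2 - log (2π) / 2`. -/
noncomputable def remainderMajorant (v : ℝ) : ℝ :=
  log (v + 1) + (v - 2) * log 3 + v - (v + 3 / 2) * log v

lemma log_one_add_inv_add_stirlingRemainder_le_remainderMajorant {v : ℝ}
    (hv : v ∈ Icc (2 : ℝ) 3) :
    log (1 + 1 / v) + stirlingRemainder v ≤ remainderMajorant v + log 2 - log (2 * π) / 2 := by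
  have hv0 : 0 < v := by linarith [hv.1]
  have hlog : log (1 + 1 / v) = log (v + 1) - log v := by
    rw [← log_div (by positivity) hv0.ne']
    congr 1
    field_simp
  have hchord := log_Gamma_add_one_le_of_mem_Icc hv
  unfold stirlingRemainder remainderMajorant
  linarith

lemma hasDerivAt_remainderMajorant {v : ℝ} (hv : 0 < v) :
    HasDerivAt remainderMajorant (log 3 - log v + 1 / (v + 1) - 3 / (2 * v)) v := by
  have h : HasDerivAt remainderMajorant
      (1 / (v + 1) + 1 * log 3 + 1 - (1 * log v + (v + 3 / 2) * v⁻¹)) v :=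
    ((((hasDerivAt_id v).add_const 1).log (by simp; positivity)).add
      (((hasDerivAt_id v).sub_const 2).mul_const (log 3))).add (hasDerivAt_id v) |>.sub
      (((hasDerivAt_id v).add_const (3 / 2)).mul (hasDerivAt_log hv.ne'))
  convert h using 1
  field_simp
  ring

lemma log_three_halves_le : log (3 / 2) ≤ 5 / 12 := by
  calc log (3 / 2) ≤ sinh (log (3 / 2)) := self_le_sinh_iff.2 (log_nonneg (by norm_num))
    _ = 5 / 12 := by rw [sinh_log (by norm_num)]; norm_num

lemma remainderMajorant_antitoneOn : AntitoneOn remainderMajorant (Icc 2 3) := by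
  have hderiv : ∀ v ∈ Icc (2 : ℝ) 3, HasDerivAt remainderMajorant _ v := fun v hv ↦
    hasDerivAt_remainderMajorant (by linarith [hv.1])
  refine antitoneOn_of_hasDerivWithinAt_nonpos (convex_Icc 2 3)
    (fun v hv ↦ (hderiv v hv).continuousAt.continuousWithinAt)
    (fun v hv ↦ (hderiv v (interior_subset hv)).hasDerivWithinAt) ?_
  intro v hv
  rw [interior_Icc] at hv
  have hv0 : 0 < v := by linarith [hv.1]
  have h32 : log 3 - log 2 ≤ 5 / 12 := by
    rw [← log_div (by norm_num) (by norm_num)]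
    exact log_three_halves_le
  have h2v : log 2 - log v ≤ 2 / v - 1 := by
    rw [← log_div (by norm_num) hv0.ne']
    exact log_le_sub_one_of_pos (by positivity)
  have h1 : 1 / (v + 1) ≤ 1 / 3 := one_div_le_one_div_of_le (by norm_num) (by linarith [hv.1])
  have h2 : 1 / (2 * v) ≤ 1 / 4 := one_div_le_one_div_of_le (by norm_num) (by linarith [hv.1])
  have : 2 / v - 3 / (2 * v) = 1 / (2 * v) := by field_simp; ring
  linarith

-- The constant `1.6` is chosen to make this hold: the margin is about `0.2%`.
lemma log_sixteen_tenths_add_remainderMajorant_two_le :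
    log 1.6 + remainderMajorant 2 ≤ log π := by
  have he : exp 2 < 7.3891 := by
    have := exp_one_lt_d9
    rw [show (2 : ℝ) = 1 + 1 by norm_num, exp_add]
    nlinarith [exp_pos 1]
  have hs : 1.4142 ≤ √2 := by
    rw [le_sqrt (by norm_num) (by norm_num)]
    norm_num
  have hnum : 1.6 * (3 * exp 2) ≤ π * (8 * √2) := by nlinarith [pi_gt_d6]
  have hlog := log_le_log (by positivity) hnum
  rw [log_mul (by norm_num) (by positivity), log_mul (by norm_num) (exp_pos 2).ne', log_exp,
    log_mul pi_ne_zero (by positivity), log_mul (by norm_num) (by positivity),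
    log_sqrt (by norm_num), show (8 : ℝ) = 2 ^ 3 by norm_num, log_pow] at hlog
  have hM : remainderMajorant 2 = log 3 + 2 - 7 / 2 * log 2 := by
    norm_num [remainderMajorant]
  linarith

lemma exists_add_nat_eq_of_two_le {n : ℝ} (hn : 2 ≤ n) :
    ∃ v ∈ Icc (2 : ℝ) 3, ∃ k : ℕ, v + k = n := by
  have h2 : 2 ≤ ⌊n⌋₊ := Nat.le_floor (by exact_mod_cast hn)
  refine ⟨n - (⌊n⌋₊ - 2 : ℕ), ?_, ⌊n⌋₊ - 2, by ring⟩
  push_cast [Nat.cast_sub h2]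
  constructor <;> linarith [Nat.floor_le (by linarith : 0 ≤ n), Nat.lt_floor_add_one n]

lemma log_sixteen_tenths_add_log_one_add_inv_add_stirlingRemainder_le {n : ℝ} (hn : 2 ≤ n) :
    log 1.6 + log (1 + 1 / n) + stirlingRemainder n ≤ log (2 * π) / 2 := by
  obtain ⟨v, hv, k, rfl⟩ := exists_add_nat_eq_of_two_le hn
  have hv0 : 0 < v := by linarith [hv.1]
  have hlog : log (1 + 1 / (v + k)) ≤ log (1 + 1 / v) := by
    gcongr
    exact le_add_of_nonneg_right k.cast_nonneg
  have hμ := stirlingRemainder_add_nat_le hv0 k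
  have hmaj := log_one_add_inv_add_stirlingRemainder_le_remainderMajorant hv
  have hanti := remainderMajorant_antitoneOn (left_mem_Icc.2 (by norm_num)) hv hv.1
  have htwo := log_sixteen_tenths_add_remainderMajorant_two_le
  have h2π : log (2 * π) = log 2 + log π := log_mul two_ne_zero pi_ne_zero
  linarith

lemma add_mul_entBin_div_add {a b : ℝ} (ha : 0 < a) (hb : 0 < b) :
    (a + b) * entBin (a / (a + b)) = (a + b) * log (a + b) - a * log a - b * log b := by
  have hab : 0 < a + b := by positivity
  rw [entBin, show 1 - a / (a + b) = b / (a + b) by field_simp; ring, log_div ha.ne' hab.ne',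
    log_div hb.ne' hab.ne']
  field_simp
  ring

lemma log_betaFn_add_one_add_one {a b : ℝ} (ha : 0 < a) (hb : 0 < b) :
    log (betaFn (a + 1) (b + 1)) = log (Gamma (a + 1)) + log (Gamma (b + 1))
      - log (a + b + 1) - log (Gamma (a + b + 1)) := by
  rw [betaFn, show a + 1 + (b + 1) = a + b + 1 + 1 by ring,
    Gamma_add_one (s := a + b + 1) (by positivity), log_div (by positivity) (by positivity),
    log_mul (by positivity) (by positivity), log_mul (by positivity) (by positivity)]
  ring

/-- **Beta function lower bound.** For all real `a, b ≥ 1`,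
`B(a+1, b+1) ≥ [1.6·√(ab)/(a+b)^{3/2}]·e^{−(a+b)·H(θ̂)}`, where `θ̂ := a/(a+b)`. -/
theorem beta_fn_lower_bound (a b : ℝ) (ha : 1 ≤ a) (hb : 1 ≤ b) :
    betaFn (a + 1) (b + 1) ≥
      1.6 * Real.sqrt (a * b) / (a + b) ^ ((3 : ℝ) / 2) *
        Real.exp (-(a + b) * entBin (a / (a + b))) := by
  have ha0 : 0 < a := by linarith
  have hb0 : 0 < b := by linarith
  have hrhs : log (1.6 * √(a * b) / (a + b) ^ ((3 : ℝ) / 2) *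
      exp (-(a + b) * entBin (a / (a + b)))) =
      log 1.6 + (log a + log b) / 2 - 3 / 2 * log (a + b) - (a + b) * entBin (a / (a + b)) := by
    rw [log_mul (by positivity) (exp_pos _).ne', log_div (by positivity) (by positivity),
      log_mul (by norm_num) (by positivity), log_sqrt (by positivity), log_mul ha0.ne' hb0.ne',
      log_rpow (by positivity), log_exp]
    ring
  have hsucc : log (1 + 1 / (a + b)) = log (a + b + 1) - log (a + b) := by
    rw [← log_div (by positivity) (by positivity)]
    congr 1
    field_simp
  rw [ge_iff_le, ← log_le_log_iff (by positivity) (by unfold betaFn; positivity),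
    log_betaFn_add_one_add_one ha0 hb0, hrhs, add_mul_entBin_div_add ha0 hb0,
    log_Gamma_add_one_eq a, log_Gamma_add_one_eq b, log_Gamma_add_one_eq (a + b)]
  linarith [stirlingRemainder_nonneg ha0, stirlingRemainder_nonneg hb0,
    log_sixteen_tenths_add_log_one_add_inv_add_stirlingRemainder_le (n := a + b) (by linarith)]
end

section
/- (Frequentist lower-tail bound for the smoothed empirical mean) Let θ ∈ [0,1], α, β > 0, and let X_1, …, X_n be independent Bernoulli(θ) random variables. Set n' := n + α + β and M := (X_1 + ⋯ + X_n + α)/n'. Then for every ε > 0 with n'·ε ≥ β, P(M ≤ θ − ε) ≤ e^{4εβ − 2β²/n'} · e^{−2n'ε²} ≤ e^{4εβ} · e^{−2n'ε²}. -/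
/-!
By Hoeffding's lemma each centred variable `θ - X i` is `1/4`-sub-Gaussian, so by independence
their sum is `n/4`-, hence `n'/4`-sub-Gaussian. The event `M ≤ θ - ε` says exactly that this sum
is at least `t := n' ε + α - (α + β) θ`, and `t ≥ n' ε - β ≥ 0` because `θ ≤ 1`. The Chernoff
bound gives `exp (-2 t² / n') ≤ exp (-2 (n' ε - β)² / n')`, and expanding the square yields the
stated product `exp (4 ε β - 2 β² / n') · exp (-2 n' ε²)`.
-/

open MeasureTheory ProbabilityTheory Real
open scoped NNReal

namespace ProbabilityTheory.HasSubgaussianMGF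

variable {Ω : Type*} [MeasurableSpace Ω] {μ : Measure Ω} {X : Ω → ℝ} {c c' : ℝ≥0}

lemma mono (h : HasSubgaussianMGF X c μ) (hc : c ≤ c') : HasSubgaussianMGF X c' μ where
  integrable_exp_mul := h.integrable_exp_mul
  mgf_le t := (h.mgf_le t).trans (exp_le_exp.2 (by gcongr))

end ProbabilityTheory.HasSubgaussianMGF

lemma integral_eq_measureReal_of_forall_eq_zero_or_one {Ω : Type*} [MeasurableSpace Ω]
    {μ : Measure Ω} {X : Ω → ℝ} (hX : Measurable X) (h01 : ∀ ω, X ω = 0 ∨ X ω = 1) :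
    ∫ ω, X ω ∂μ = μ.real {ω | X ω = 1} := by
  have hind : X = {ω | X ω = 1}.indicator 1 := by
    funext ω
    rcases h01 ω with h | h <;> simp [h]
  conv_lhs => rw [hind]
  exact integral_indicator_one (hX (measurableSet_singleton 1))

lemma hasSubgaussianMGF_sum_integral_sub_of_mem_Icc {Ω ι : Type*} [MeasurableSpace Ω]
    [Fintype ι] {P : Measure Ω} [IsProbabilityMeasure P] {X : ι → Ω → ℝ}
    (hmeas : ∀ i, Measurable (X i)) (hX : ∀ i, ∀ᵐ ω ∂P, X i ω ∈ Set.Icc 0 1)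
    (hindep : iIndepFun X P) :
    HasSubgaussianMGF (fun ω ↦ ∑ i, (P[X i] - X i ω)) (Fintype.card ι / 4) P := by
  have hindep' : iIndepFun (fun i ω ↦ P[X i] - X i ω) P :=
    hindep.comp (fun i (y : ℝ) ↦ ∫ ω, X i ω ∂P - y) fun _ ↦ measurable_const.sub measurable_id
  have hX' (i : ι) : HasSubgaussianMGF (fun ω ↦ P[X i] - X i ω) (1 / 4) P := by
    convert (hasSubgaussianMGF_of_mem_Icc (hmeas i).aemeasurable (hX i)).neg using 1
    · ext ω; simp
    · ext; norm_num
  have h := HasSubgaussianMGF.sum_of_iIndepFun hindep' (s := Finset.univ) fun i _ ↦ hX' i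
  rwa [Finset.sum_const, Finset.card_univ, nsmul_eq_mul, ← div_eq_mul_one_div] at h

lemma measureReal_le_sum_integral_sub_le_exp {Ω ι : Type*} [MeasurableSpace Ω]
    [Fintype ι] {P : Measure Ω} [IsProbabilityMeasure P] {X : ι → Ω → ℝ}
    (hmeas : ∀ i, Measurable (X i)) (hX : ∀ i, ∀ᵐ ω ∂P, X i ω ∈ Set.Icc 0 1)
    (hindep : iIndepFun X P) {s c : ℝ} (hs : 0 ≤ s) (hc : (Fintype.card ι : ℝ) ≤ c) :
    P.real {ω | s ≤ ∑ i, (P[X i] - X i ω)} ≤ exp (-2 * s ^ 2 / c) := by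
  rcases (Nat.cast_nonneg _).trans hc |>.eq_or_lt with rfl | hc0
  · simp [measureReal_le_one]
  have hc' : (Fintype.card ι / 4 : ℝ≥0) ≤ (c / 4).toNNReal := by
    rw [← NNReal.coe_le_coe, Real.coe_toNNReal _ (by positivity)]
    push_cast
    linarith
  have hsubG := (hasSubgaussianMGF_sum_integral_sub_of_mem_Icc hmeas hX hindep).mono hc'
  calc P.real {ω | s ≤ ∑ i, (P[X i] - X i ω)} ≤ exp (-s ^ 2 / (2 * (c / 4).toNNReal)) :=
        hsubG.measure_ge_le hs
    _ = exp (-2 * s ^ 2 / c) := by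
        rw [Real.coe_toNNReal _ (by positivity)]
        congr 1
        field_simp
        ring

theorem smoothed_mean_lower_tail_general {Ω : Type*} [MeasurableSpace Ω]
    (P : Measure Ω) [IsProbabilityMeasure P]
    (θ : ℝ) (hθ : θ ∈ Set.Icc (0 : ℝ) 1) (α β : ℝ) (hα : 0 < α) (hβ : 0 < β)
    (n : ℕ) (X : Fin n → Ω → ℝ)
    (hmeas : ∀ i, Measurable (X i))
    (hval : ∀ i ω, X i ω = 0 ∨ X i ω = 1)
    (hdist : ∀ i, P {ω | X i ω = 1} = ENNReal.ofReal θ)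
    (hindep : iIndepFun X P)
    (ε : ℝ) (hεβ : β ≤ ((n : ℝ) + α + β) * ε) :
    P {ω | (∑ i, X i ω + α) / ((n : ℝ) + α + β) ≤ θ - ε} ≤
        ENNReal.ofReal
          (Real.exp (4 * ε * β - 2 * β ^ 2 / ((n : ℝ) + α + β)) *
            Real.exp (-2 * ((n : ℝ) + α + β) * ε ^ 2)) ∧
      Real.exp (4 * ε * β - 2 * β ^ 2 / ((n : ℝ) + α + β)) *
          Real.exp (-2 * ((n : ℝ) + α + β) * ε ^ 2) ≤
        Real.exp (4 * ε * β) * Real.exp (-2 * ((n : ℝ) + α + β) * ε ^ 2) := by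
  obtain ⟨hθ0, hθ1⟩ := hθ
  set n' : ℝ := (n : ℝ) + α + β
  have hn' : 0 < n' := by positivity
  have hmean (i : Fin n) : P[X i] = θ := by
    rw [integral_eq_measureReal_of_forall_eq_zero_or_one (hmeas i) (hval i), measureReal_def,
      hdist i, ENNReal.toReal_ofReal hθ0]
  set t := n' * ε + α - (α + β) * θ
  have ht : n' * ε - β ≤ t := by nlinarith
  have hevent : {ω | (∑ i, X i ω + α) / n' ≤ θ - ε} = {ω | t ≤ ∑ i, (P[X i] - X i ω)} := by
    ext ω
    simp only [hmean, Set.mem_ofPred_eq, div_le_iff₀ hn', Finset.sum_sub_distrib,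
      Finset.sum_const, Finset.card_univ, Fintype.card_fin, nsmul_eq_mul]
    constructor <;> intro h <;> linarith
  have htail := measureReal_le_sum_integral_sub_le_exp hmeas
    (fun i ↦ ae_of_all _ fun ω ↦ by rcases hval i ω with h | h <;> simp [h]) hindep
    (s := t) (c := n') (by linarith) (by simp only [Fintype.card_fin]; linarith)
  have hexp : exp (4 * ε * β - 2 * β ^ 2 / n') * exp (-2 * n' * ε ^ 2)
      = exp (-2 * (n' * ε - β) ^ 2 / n') := by
    rw [← exp_add]
    congr 1
    field_simp
    ring
  refine ⟨?_, ?_⟩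
  · rw [hevent, ← ofReal_measureReal, hexp]
    refine ENNReal.ofReal_le_ofReal (htail.trans ?_)
    rw [exp_le_exp]
    exact div_le_div_of_nonneg_right (by nlinarith) hn'.le
  · have : 0 ≤ 2 * β ^ 2 / n' := by positivity
    gcongr
    linarith

/-- **Frequentist lower-tail bound for the smoothed empirical mean.** Let `θ ∈ [0,1]`,
`α, β > 0`, and let `X_1, …, X_n` be independent Bernoulli(θ) random variables.  Set
`n' := n + α + β` and `M := (X_1 + ⋯ + X_n + α)/n'`.  Then for every `ε > 0` with `n'·ε ≥ β`,
`P(M ≤ θ − ε) ≤ e^{4εβ − 2β²/n'}·e^{−2n'ε²} ≤ e^{4εβ}·e^{−2n'ε²}`. -/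
theorem smoothed_mean_lower_tail {Ω : Type*} [MeasurableSpace Ω]
    (P : Measure Ω) [IsProbabilityMeasure P]
    (θ : ℝ) (hθ : θ ∈ Set.Icc (0 : ℝ) 1) (α β : ℝ) (hα : 0 < α) (hβ : 0 < β)
    (n : ℕ) (X : Fin n → Ω → ℝ)
    (hmeas : ∀ i, Measurable (X i))
    (hval : ∀ i ω, X i ω = 0 ∨ X i ω = 1)
    (hdist : ∀ i, P {ω | X i ω = 1} = ENNReal.ofReal θ)
    (hindep : iIndepFun X P)
    (ε : ℝ) (hε : 0 < ε) (hεβ : β ≤ ((n : ℝ) + α + β) * ε) :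
    P {ω | (∑ i, X i ω + α) / ((n : ℝ) + α + β) ≤ θ - ε} ≤
        ENNReal.ofReal
          (Real.exp (4 * ε * β - 2 * β ^ 2 / ((n : ℝ) + α + β)) *
            Real.exp (-2 * ((n : ℝ) + α + β) * ε ^ 2)) ∧
      Real.exp (4 * ε * β - 2 * β ^ 2 / ((n : ℝ) + α + β)) *
          Real.exp (-2 * ((n : ℝ) + α + β) * ε ^ 2) ≤
        Real.exp (4 * ε * β) * Real.exp (-2 * ((n : ℝ) + α + β) * ε ^ 2) :=
  smoothed_mean_lower_tail_general P θ hθ α β hα hβ n X hmeas hval hdist hindep ε hεβ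
end

section
/- (Bayesian Control Rule regret bound) Let ℳ be a finite set of environment measures over a finite percept set ℰ, each μ ∈ ℳ paired with a policy π_μ, where a policy assigns to each history h_{<t} a probability distribution π_μ(· | h_{<t}) over the finite action set 𝒜. Let w' be a prior on ℳ with w'(ρ) > 0 for all ρ, let w^ρ_{i−1} := w'(ρ)·ρ(e_{<i} || a_{<i}) / Σ_{ν∈ℳ} w'(ν)·ν(e_{<i} || a_{<i}) be the posterior weights, let ξ be the Bayes mixture environment ξ(e_i | h_{<i}a_i) := Σ_{ρ∈ℳ} w^ρ_{i−1}·ρ(e_i | h_{<i}a_i), and let π̂ be the Bayesian Control Rule policy π̂(a_i | h_{<i}) := Σ_{ρ∈ℳ} w^ρ_{i−1}·π_ρ(a_i | h_{<i}). Then for every μ ∈ ℳ, every t ∈ ℕ and every history h_{1:t} with μ^{π_μ}(h_{1:t}) > 0, the regret R^{ξ,π̂}_t(h_{1:t}) := log(μ^{π_μ}(h_{1:t}) / ξ^{π̂}(h_{1:t})) satisfies R^{ξ,π̂}_t(h_{1:t}) ≤ −log w'(μ) − Σ_{i=1}^t log w^μ_{i−1}. -/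
/-- The history `h_{<k} = a_0 e_0 … a_{k−1} e_{k−1}` as a list of action–percept pairs. -/
def histList {A E : Type*} (a : ℕ → A) (e : ℕ → E) (k : ℕ) : List (A × E) :=
  (List.range k).map fun i => (a i, e i)

/-- `ρ(e_{1:t} ‖ a_{1:t}) := ∏_{k=1}^t ρ(e_k | h_{<k} a_k)` for an environment measure
`env ρ : history → action → percept → ℝ`. -/
def envProd {M A E : Type*} (env : M → List (A × E) → A → E → ℝ)
    (a : ℕ → A) (e : ℕ → E) (ρ : M) (t : ℕ) : ℝ :=
  ∏ k ∈ Finset.range t, env ρ (histList a e k) (a k) (e k)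

/-- The posterior weight `w^ρ_k := w'(ρ)·ρ(e_{<k+1} ‖ a_{<k+1}) / Σ_ν w'(ν)·ν(e_{<k+1} ‖ a_{<k+1})`
after `k` interaction steps. -/
noncomputable def postW {M A E : Type*} [Fintype M] (env : M → List (A × E) → A → E → ℝ)
    (w' : M → ℝ) (a : ℕ → A) (e : ℕ → E) (ρ : M) (k : ℕ) : ℝ :=
  w' ρ * envProd env a e ρ k / ∑ ν, w' ν * envProd env a e ν k

/-- The Bayes-mixture environment probability of the percept sequence:
`ξ(e_{1:t} ‖ a_{1:t}) = ∏_{k=1}^t Σ_ρ w^ρ_{k−1}·ρ(e_k | h_{<k} a_k)`. -/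
noncomputable def xiProd {M A E : Type*} [Fintype M] (env : M → List (A × E) → A → E → ℝ)
    (w' : M → ℝ) (a : ℕ → A) (e : ℕ → E) (t : ℕ) : ℝ :=
  ∏ k ∈ Finset.range t, ∑ ρ, postW env w' a e ρ k * env ρ (histList a e k) (a k) (e k)

/-- The agent–environment probability `ν^π(h_{1:t}) = ∏_{k=1}^t π(a_k | h_{<k})·ν(e_k | h_{<k} a_k)`
for environment `ν = env ρ` and policy `π = pol ρ`. -/
def agentEnvProd {M A E : Type*} (env : M → List (A × E) → A → E → ℝ)
    (pol : M → List (A × E) → A → ℝ) (a : ℕ → A) (e : ℕ → E) (ρ : M) (t : ℕ) : ℝ :=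
  ∏ k ∈ Finset.range t, pol ρ (histList a e k) (a k) * env ρ (histList a e k) (a k) (e k)

/-- The agent–environment probability of the history under the Bayes mixture environment `ξ`
and the Bayesian Control Rule policy `π̂(a_k | h_{<k}) := Σ_ρ w^ρ_{k−1}·π_ρ(a_k | h_{<k})`. -/
noncomputable def xiBCRProd {M A E : Type*} [Fintype M]
    (env : M → List (A × E) → A → E → ℝ) (pol : M → List (A × E) → A → ℝ)
    (w' : M → ℝ) (a : ℕ → A) (e : ℕ → E) (t : ℕ) : ℝ :=
  ∏ k ∈ Finset.range t,
    (∑ ρ, postW env w' a e ρ k * pol ρ (histList a e k) (a k)) *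
      (∑ ρ, postW env w' a e ρ k * env ρ (histList a e k) (a k) (e k))


/-!
Write `Z_k := Σ_ν w'(ν)·ν(e_{<k} ‖ a_{<k})` for the normaliser of the posterior weights. Since
`w^ρ_k · Z_k = w'(ρ)·ρ(e_{<k} ‖ a_{<k})`, the mixture predictions telescope, `ξ(e_{1:t} ‖ a_{1:t}) = Z_t`,
and `Z_t ≥ w'(μ)·μ(e_{1:t} ‖ a_{1:t})`. Bounding each factor of the Bayesian Control Rule policy below
by its `μ`-term, `π̂(a_k | h_{<k}) ≥ w^μ_k·π_μ(a_k | h_{<k})`, gives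
`ξ^{π̂}(h_{1:t}) ≥ w'(μ)·(∏_k w^μ_k)·μ^{π_μ}(h_{1:t})`; taking logarithms is the claimed bound.
-/

open Finset

def evidence {M A E : Type*} [Fintype M] (env : M → List (A × E) → A → E → ℝ) (w' : M → ℝ)
    (a : ℕ → A) (e : ℕ → E) (k : ℕ) : ℝ :=
  ∑ ν, w' ν * envProd env a e ν k

section BayesMixture

variable {M A E : Type*} {env : M → List (A × E) → A → E → ℝ} {pol : M → List (A × E) → A → ℝ}
  {w' : M → ℝ} (a : ℕ → A) (e : ℕ → E)

theorem envProd_succ (ρ : M) (k : ℕ) :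
    envProd env a e ρ (k + 1) = envProd env a e ρ k * env ρ (histList a e k) (a k) (e k) :=
  prod_range_succ _ _

theorem envProd_nonneg (henv : ∀ ρ h x y, 0 ≤ env ρ h x y) (ρ : M) (k : ℕ) :
    0 ≤ envProd env a e ρ k :=
  prod_nonneg fun _ _ => henv _ _ _ _

theorem envProd_pos_of_le (henv : ∀ ρ h x y, 0 ≤ env ρ h x y) {ρ : M} {k t : ℕ} (hkt : k ≤ t)
    (ht : 0 < envProd env a e ρ t) : 0 < envProd env a e ρ k := by
  refine (envProd_nonneg a e henv ρ k).lt_of_ne' (prod_ne_zero_iff.2 fun i hi => ?_)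
  exact prod_ne_zero_iff.1 ht.ne' i (range_subset_range.2 hkt hi)

theorem agentEnvProd_eq_prod_mul_envProd (ρ : M) (t : ℕ) :
    agentEnvProd env pol a e ρ t =
      (∏ k ∈ range t, pol ρ (histList a e k) (a k)) * envProd env a e ρ t :=
  prod_mul_distrib

theorem envProd_pos_of_agentEnvProd_pos (hpol : ∀ ρ h x, 0 ≤ pol ρ h x) {ρ : M} {t : ℕ}
    (ht : 0 < agentEnvProd env pol a e ρ t) : 0 < envProd env a e ρ t := by
  rw [agentEnvProd_eq_prod_mul_envProd] at ht
  exact pos_of_mul_pos_right ht (prod_nonneg fun _ _ => hpol _ _ _)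

variable [Fintype M]

theorem postW_eq_div_evidence (ρ : M) (k : ℕ) :
    postW env w' a e ρ k = w' ρ * envProd env a e ρ k / evidence env w' a e k :=
  rfl

theorem mul_envProd_le_evidence (hw' : ∀ ρ, 0 ≤ w' ρ) (henv : ∀ ρ h x y, 0 ≤ env ρ h x y)
    (ρ : M) (k : ℕ) : w' ρ * envProd env a e ρ k ≤ evidence env w' a e k :=
  single_le_sum (f := fun ν => w' ν * envProd env a e ν k)
    (fun ν _ => mul_nonneg (hw' ν) (envProd_nonneg a e henv ν k)) (mem_univ ρ)

theorem postW_nonneg (hw' : ∀ ρ, 0 ≤ w' ρ) (henv : ∀ ρ h x y, 0 ≤ env ρ h x y) (ρ : M) (k : ℕ) :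
    0 ≤ postW env w' a e ρ k :=
  div_nonneg (mul_nonneg (hw' ρ) (envProd_nonneg a e henv ρ k))
    (sum_nonneg fun ν _ => mul_nonneg (hw' ν) (envProd_nonneg a e henv ν k))

theorem postW_pos (hw' : ∀ ρ, 0 ≤ w' ρ) (henv : ∀ ρ h x y, 0 ≤ env ρ h x y) {ρ : M} {k : ℕ}
    (hρ : 0 < w' ρ) (hk : 0 < envProd env a e ρ k) : 0 < postW env w' a e ρ k :=
  div_pos (mul_pos hρ hk)
    ((mul_pos hρ hk).trans_le (mul_envProd_le_evidence a e hw' henv ρ k))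

/-- If the normaliser vanishes, so does each of its nonnegative terms `w'(ρ)·ρ(e_{<k} ‖ a_{<k})`. -/
theorem postW_mul_evidence (hw' : ∀ ρ, 0 ≤ w' ρ) (henv : ∀ ρ h x y, 0 ≤ env ρ h x y)
    (ρ : M) (k : ℕ) :
    postW env w' a e ρ k * evidence env w' a e k = w' ρ * envProd env a e ρ k := by
  rw [postW_eq_div_evidence]
  by_cases hZ : evidence env w' a e k = 0
  · rw [hZ, mul_zero, eq_comm]
    exact (sum_eq_zero_iff_of_nonneg fun ν _ =>
      mul_nonneg (hw' ν) (envProd_nonneg a e henv ν k)).1 hZ ρ (mem_univ ρ)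
  · exact div_mul_cancel₀ _ hZ

theorem evidence_succ (hw' : ∀ ρ, 0 ≤ w' ρ) (henv : ∀ ρ h x y, 0 ≤ env ρ h x y) (k : ℕ) :
    evidence env w' a e (k + 1) =
      (∑ ρ, postW env w' a e ρ k * env ρ (histList a e k) (a k) (e k)) *
        evidence env w' a e k := by
  rw [sum_mul]
  refine sum_congr rfl fun ρ _ => ?_
  rw [mul_right_comm, postW_mul_evidence a e hw' henv, envProd_succ, mul_assoc]

theorem xiProd_eq_evidence (hw' : ∀ ρ, 0 ≤ w' ρ) (henv : ∀ ρ h x y, 0 ≤ env ρ h x y)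
    (hw'_sum : ∑ ρ, w' ρ = 1) (t : ℕ) : xiProd env w' a e t = evidence env w' a e t := by
  induction t with
  | zero => simpa [xiProd, evidence, envProd] using hw'_sum.symm
  | succ t ih => rw [xiProd, prod_range_succ, ← xiProd, ih, evidence_succ a e hw' henv, mul_comm]

theorem mul_prod_postW_mul_agentEnvProd_le_xiBCRProd (hw' : ∀ ρ, 0 ≤ w' ρ)
    (henv : ∀ ρ h x y, 0 ≤ env ρ h x y) (hpol : ∀ ρ h x, 0 ≤ pol ρ h x)
    (hw'_sum : ∑ ρ, w' ρ = 1) (μ : M) (t : ℕ) :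
    w' μ * (∏ k ∈ range t, postW env w' a e μ k) * agentEnvProd env pol a e μ t ≤
      xiBCRProd env pol w' a e t := by
  have hpolicy : ∀ k ∈ range t, postW env w' a e μ k * pol μ (histList a e k) (a k) ≤
      ∑ ρ, postW env w' a e ρ k * pol ρ (histList a e k) (a k) := fun k _ =>
    single_le_sum (f := fun ρ => postW env w' a e ρ k * pol ρ (histList a e k) (a k))
      (fun ρ _ => mul_nonneg (postW_nonneg a e hw' henv ρ k) (hpol _ _ _)) (mem_univ μ)
  calc w' μ * (∏ k ∈ range t, postW env w' a e μ k) * agentEnvProd env pol a e μ t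
      = (∏ k ∈ range t, postW env w' a e μ k * pol μ (histList a e k) (a k)) *
          (w' μ * envProd env a e μ t) := by
        rw [agentEnvProd_eq_prod_mul_envProd, prod_mul_distrib]; ring
    _ ≤ (∏ k ∈ range t, ∑ ρ, postW env w' a e ρ k * pol ρ (histList a e k) (a k)) *
          evidence env w' a e t :=
        mul_le_mul (prod_le_prod
            (fun k _ => mul_nonneg (postW_nonneg a e hw' henv μ k) (hpol _ _ _)) hpolicy)
          (mul_envProd_le_evidence a e hw' henv μ t)
          (mul_nonneg (hw' μ) (envProd_nonneg a e henv μ t))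
          (prod_nonneg fun k _ => sum_nonneg fun ρ _ =>
            mul_nonneg (postW_nonneg a e hw' henv ρ k) (hpol _ _ _))
    _ = xiBCRProd env pol w' a e t := by
        rw [← xiProd_eq_evidence a e hw' henv hw'_sum, xiBCRProd, xiProd, prod_mul_distrib]

end BayesMixture

theorem bcr_regret_bound_general {M A E : Type*} [Fintype M]
    (env : M → List (A × E) → A → E → ℝ)
    (henv_nonneg : ∀ ρ h x y, 0 ≤ env ρ h x y)
    (pol : M → List (A × E) → A → ℝ)
    (hpol_nonneg : ∀ ρ h x, 0 ≤ pol ρ h x)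
    (w' : M → ℝ) (hw'_pos : ∀ ρ, 0 < w' ρ) (hw'_sum : ∑ ρ, w' ρ = 1)
    (μ : M) (t : ℕ) (a : ℕ → A) (e : ℕ → E)
    (hpos : 0 < agentEnvProd env pol a e μ t) :
    Real.log (agentEnvProd env pol a e μ t / xiBCRProd env pol w' a e t) ≤
      -Real.log (w' μ) - ∑ k ∈ Finset.range t, Real.log (postW env w' a e μ k) := by
  have hw' : ∀ ρ, 0 ≤ w' ρ := fun ρ => (hw'_pos ρ).le
  have hμ := hw'_pos μ
  have hposterior : ∀ k ∈ range t, 0 < postW env w' a e μ k := fun k hk =>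
    postW_pos a e hw' henv_nonneg hμ <| envProd_pos_of_le a e henv_nonneg
      (mem_range.1 hk).le (envProd_pos_of_agentEnvProd_pos a e hpol_nonneg hpos)
  have hL : 0 < ∏ k ∈ range t, postW env w' a e μ k := prod_pos hposterior
  have hlower := mul_prod_postW_mul_agentEnvProd_le_xiBCRProd a e hw' henv_nonneg hpol_nonneg
    hw'_sum μ t
  have hlog := Real.log_le_log (by positivity) hlower
  rw [Real.log_mul (by positivity) hpos.ne', Real.log_mul hμ.ne' hL.ne',
    Real.log_prod fun k hk => (hposterior k hk).ne'] at hlog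
  rw [Real.log_div hpos.ne' (hlower.trans_lt' (by positivity)).ne']
  linarith

/-- **Bayesian Control Rule regret bound.** For a finite class `M` of environment measures over
finite percept/action sets, each `μ ∈ M` paired with a policy `π_μ`, a prior `w'` positive on
`M`, every `μ ∈ M`, every `t` and every history with `μ^{π_μ}(h_{1:t}) > 0`, the regret
satisfies `log (μ^{π_μ}(h_{1:t}) / ξ^{π̂}(h_{1:t})) ≤ −log w'(μ) − Σ_{i=1}^t log w^μ_{i−1}`. -/
theorem bcr_regret_bound {M A E : Type*} [Fintype M] [Fintype E] [Fintype A]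
    (env : M → List (A × E) → A → E → ℝ)
    (henv_nonneg : ∀ ρ h x y, 0 ≤ env ρ h x y)
    (henv_sum : ∀ ρ h x, ∑ y, env ρ h x y = 1)
    (pol : M → List (A × E) → A → ℝ)
    (hpol_nonneg : ∀ ρ h x, 0 ≤ pol ρ h x)
    (hpol_sum : ∀ ρ h, ∑ x, pol ρ h x = 1)
    (w' : M → ℝ) (hw'_pos : ∀ ρ, 0 < w' ρ) (hw'_sum : ∑ ρ, w' ρ = 1)
    (μ : M) (t : ℕ) (a : ℕ → A) (e : ℕ → E)
    (hpos : 0 < agentEnvProd env pol a e μ t) :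
    Real.log (agentEnvProd env pol a e μ t / xiBCRProd env pol w' a e t) ≤
      -Real.log (w' μ) - ∑ k ∈ Finset.range t, Real.log (postW env w' a e μ k) :=
  bcr_regret_bound_general env henv_nonneg pol hpol_nonneg w' hw'_pos hw'_sum μ t a e hpos
end

section
/- (Active segments partition the set of binary temporal partitions) Fix D ∈ ℕ and a time t with 1 ≤ t ≤ 2^D, and for i ∈ {0,…,D} let s_i denote the unique segment of length 2^i in ActiveSegments_D(t). Then every 𝒫 ∈ C_D contains exactly one of the segments s_0, …, s_D; consequently the sets C_D^i := {𝒫 ∈ C_D : s_i ∈ 𝒫}, i = 0,…,D, are pairwise disjoint with ∪_{i=0}^D C_D^i = C_D, and for any probability weights w on C_D (w(𝒫) ≥ 0, Σ_{𝒫∈C_D} w(𝒫) = 1) it holds that Σ_{i=0}^D Σ_{𝒫∈C_D^i} w(𝒫) = 1. -/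
/-!
Every `𝒫 ∈ C_D(t)` is a partition of `{t, …, t + 2^D − 1}` into dyadic blocks
`{t + k 2^i, …, t + (k+1) 2^i − 1}`, so the time `t` lies in exactly one segment of `𝒫`, and
that segment is a dyadic block of some length `2^i`. A point lies in only one dyadic block of a
given length, so this segment is the active segment `s_i`; conversely every `s_j ∈ 𝒫` contains
`t`, hence is that segment, and `j = i` by comparing lengths.
-/

open Finset

def IsDyadicSeg (t i : ℕ) (x : ℕ × ℕ) : Prop :=
  ∃ k, x.1 = t + k * 2 ^ i ∧ x.2 + 1 = x.1 + 2 ^ i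

theorem IsDyadicSeg.length_eq {t i : ℕ} {x : ℕ × ℕ} (hx : IsDyadicSeg t i x) :
    x.2 + 1 - x.1 = 2 ^ i := by
  obtain ⟨_, -, h⟩ := hx
  have := @Nat.one_le_two_pow i
  omega

theorem IsDyadicSeg.eq_of_mem {t i u : ℕ} {x y : ℕ × ℕ} (hx : IsDyadicSeg t i x)
    (hy : IsDyadicSeg t i y) (hxu : x.1 ≤ u ∧ u ≤ x.2) (hyu : y.1 ≤ u ∧ u ≤ y.2) : x = y := by
  obtain ⟨k, hx1, hx2⟩ := hx
  obtain ⟨l, hy1, hy2⟩ := hy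
  have hk : (u - t) / 2 ^ i = k := Nat.div_eq_of_lt_le (by omega) (by rw [Nat.succ_mul]; omega)
  have hl : (u - t) / 2 ^ i = l := Nat.div_eq_of_lt_le (by omega) (by rw [Nat.succ_mul]; omega)
  obtain rfl : k = l := hk.symm.trans hl
  exact Prod.ext (by omega) (by omega)

theorem mem_CD_succ {D t : ℕ} {P : Finset (ℕ × ℕ)} :
    P ∈ CD (D + 1) t ↔ P = {(t, t + 2 ^ (D + 1) - 1)} ∨
      ∃ P₁ ∈ CD D t, ∃ P₂ ∈ CD D (t + 2 ^ D), P₁ ∪ P₂ = P := by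
  simp [CD, and_assoc]

theorem bounds_of_mem_CD_s17 {D t : ℕ} {P : Finset (ℕ × ℕ)} (hP : P ∈ CD D t) {x : ℕ × ℕ}
    (hx : x ∈ P) : t ≤ x.1 ∧ x.2 < t + 2 ^ D := by
  induction D generalizing t P with
  | zero =>
    simp only [CD, mem_singleton] at hP
    subst hP
    simp_all
  | succ D ih =>
    have := @Nat.one_le_two_pow D
    rcases mem_CD_succ.mp hP with rfl | ⟨P₁, hP₁, P₂, hP₂, rfl⟩
    · rw [mem_singleton.mp hx]
      constructor <;> simp only <;> omega
    · rcases mem_union.mp hx with hx | hx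
      · have := ih hP₁ hx
        omega
      · have := ih hP₂ hx
        omega

theorem isDyadicSeg_of_mem_CD {D t : ℕ} {P : Finset (ℕ × ℕ)} (hP : P ∈ CD D t) {x : ℕ × ℕ}
    (hx : x ∈ P) : ∃ i ≤ D, IsDyadicSeg t i x := by
  induction D generalizing t P with
  | zero =>
    simp only [CD, mem_singleton] at hP
    subst hP
    rw [mem_singleton.mp hx]
    exact ⟨0, le_rfl, 0, by simp, by simp⟩
  | succ D ih =>
    have := @Nat.one_le_two_pow D
    rcases mem_CD_succ.mp hP with rfl | ⟨P₁, hP₁, P₂, hP₂, rfl⟩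
    · rw [mem_singleton.mp hx]
      exact ⟨D + 1, le_rfl, 0, by simp, by simp only; omega⟩
    · rcases mem_union.mp hx with hx | hx
      · obtain ⟨i, hi, hdy⟩ := ih hP₁ hx
        exact ⟨i, by omega, hdy⟩
      · obtain ⟨i, hi, k, hx1, hx2⟩ := ih hP₂ hx
        -- shifting the origin by `2^D` shifts the block index by `2^(D-i)`
        have hpow : 2 ^ (D - i) * 2 ^ i = 2 ^ D := by rw [← pow_add, Nat.sub_add_cancel hi]
        exact ⟨i, by omega, k + 2 ^ (D - i), by rw [hx1, add_mul, hpow]; ring, hx2⟩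

theorem existsUnique_mem_CD_cover {D t u : ℕ} {P : Finset (ℕ × ℕ)} (hP : P ∈ CD D t)
    (htu : t ≤ u) (hut : u < t + 2 ^ D) : ∃! x, x ∈ P ∧ x.1 ≤ u ∧ u ≤ x.2 := by
  induction D generalizing t P with
  | zero =>
    simp only [CD, mem_singleton] at hP
    subst hP
    exact ⟨(t, t), by simp; omega, fun y hy => by simpa using hy.1⟩
  | succ D ih =>
    have := @Nat.one_le_two_pow D
    rcases mem_CD_succ.mp hP with rfl | ⟨P₁, hP₁, P₂, hP₂, rfl⟩
    · exact ⟨_, ⟨mem_singleton_self _, by simp only; omega⟩, fun y hy => mem_singleton.mp hy.1⟩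
    · by_cases hmid : u < t + 2 ^ D
      · obtain ⟨x, ⟨hx, hxu⟩, huniq⟩ := ih hP₁ htu hmid
        refine ⟨x, ⟨mem_union_left _ hx, hxu⟩, fun y ⟨hy, hyu⟩ => ?_⟩
        rcases mem_union.mp hy with hy | hy
        · exact huniq y ⟨hy, hyu⟩
        · have := bounds_of_mem_CD_s17 hP₂ hy
          omega
      · obtain ⟨x, ⟨hx, hxu⟩, huniq⟩ := ih hP₂ (by omega) (by omega)
        refine ⟨x, ⟨mem_union_right _ hx, hxu⟩, fun y ⟨hy, hyu⟩ => ?_⟩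
        rcases mem_union.mp hy with hy | hy
        · have := bounds_of_mem_CD_s17 hP₁ hy
          omega
        · exact huniq y ⟨hy, hyu⟩

theorem existsUnique_dyadic_mem_CD {D t u : ℕ} {P : Finset (ℕ × ℕ)} (hP : P ∈ CD D t)
    (htu : t ≤ u) (hut : u < t + 2 ^ D) {s : ℕ → ℕ × ℕ}
    (hs : ∀ i ≤ D, IsDyadicSeg t i (s i) ∧ (s i).1 ≤ u ∧ u ≤ (s i).2) :
    ∃! i, i ≤ D ∧ s i ∈ P := by
  obtain ⟨x, ⟨hx, hxu⟩, huniq⟩ := existsUnique_mem_CD_cover hP htu hut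
  obtain ⟨i, hi, hdy⟩ := isDyadicSeg_of_mem_CD hP hx
  have hsi : s i = x := (hs i hi).1.eq_of_mem hdy (hs i hi).2 hxu
  refine ⟨i, ⟨hi, hsi ▸ hx⟩, fun j ⟨hj, hsj⟩ => ?_⟩
  have hsj : s j = s i := (huniq _ ⟨hsj, (hs j hj).2⟩).trans hsi.symm
  exact Nat.pow_right_injective le_rfl <|
    (hs j hj).1.length_eq.symm.trans (hsj ▸ (hs i hi).1.length_eq)

section FinsetPartition

variable {α ι : Type*} {S : Finset α} {I : Finset ι} {p : ι → α → Prop}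
  [∀ i, DecidablePred (p i)]

theorem pairwiseDisjoint_filter_of_existsUnique (h : ∀ a ∈ S, ∃! i, i ∈ I ∧ p i a) :
    (I : Set ι).PairwiseDisjoint fun i => S.filter (p i) := by
  intro i _ j _ hij
  refine disjoint_left.mpr fun a hai haj => hij ?_
  obtain ⟨ha, hpi⟩ := mem_filter.mp hai
  obtain ⟨-, hpj⟩ := mem_filter.mp haj
  exact (h a ha).unique ⟨‹_›, hpi⟩ ⟨‹_›, hpj⟩

theorem biUnion_filter_of_existsUnique [DecidableEq α] (h : ∀ a ∈ S, ∃! i, i ∈ I ∧ p i a) :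
    I.biUnion (fun i => S.filter (p i)) = S := by
  ext a
  simp only [mem_biUnion, mem_filter]
  exact ⟨fun ⟨_, _, ha, _⟩ => ha, fun ha => ((h a ha).exists.imp fun i hi => ⟨hi.1, ha, hi.2⟩)⟩

end FinsetPartition

/-- **Active segments partition the set of binary temporal partitions.** Fix `1 ≤ t ≤ 2^D`
and let `s i` be the unique active segment of length `2^i` at time `t`, for `i = 0,…,D`.
Then every `𝒫 ∈ C_D` contains exactly one of `s 0, …, s D`; consequently the sets
`C_D^i := {𝒫 ∈ C_D : s i ∈ 𝒫}` are pairwise disjoint with union `C_D`, and for any probability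
weights `w` on `C_D` it holds that `Σ_{i=0}^D Σ_{𝒫 ∈ C_D^i} w(𝒫) = 1`. -/
theorem active_segments_partition_CD (D t : ℕ) (ht1 : 1 ≤ t) (ht2 : t ≤ 2 ^ D)
    (s : ℕ → ℕ × ℕ)
    (hs : ∀ i ≤ D, s i ∈ ActiveSegments D t ∧ (s i).2 + 1 - (s i).1 = 2 ^ i) :
    (∀ P ∈ CD D 1, ∃! i, i ≤ D ∧ s i ∈ P) ∧
      (∀ i ≤ D, ∀ j ≤ D, i ≠ j →
        Disjoint ((CD D 1).filter fun P => s i ∈ P) ((CD D 1).filter fun P => s j ∈ P)) ∧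
      ((Finset.range (D + 1)).biUnion fun i => (CD D 1).filter fun P => s i ∈ P) = CD D 1 ∧
      (∀ w : Finset (ℕ × ℕ) → ℝ, (∀ P ∈ CD D 1, 0 ≤ w P) → (∑ P ∈ CD D 1, w P) = 1 →
        ∑ i ∈ Finset.range (D + 1), ∑ P ∈ (CD D 1).filter (fun P => s i ∈ P), w P = 1) := by
  have hdyadic : ∀ i ≤ D, IsDyadicSeg 1 i (s i) ∧ (s i).1 ≤ t ∧ t ≤ (s i).2 := by
    intro i hi
    obtain ⟨⟨hst, hts, P, hP, hsP⟩, hlen⟩ := hs i hi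
    obtain ⟨j, -, hj⟩ := isDyadicSeg_of_mem_CD hP hsP
    obtain rfl : j = i := Nat.pow_right_injective le_rfl (hj.length_eq.symm.trans hlen)
    exact ⟨hj, hst, hts⟩
  have hunique : ∀ P ∈ CD D 1, ∃! i, i ≤ D ∧ s i ∈ P := fun P hP =>
    existsUnique_dyadic_mem_CD hP ht1 (by omega) hdyadic
  have hunique' : ∀ P ∈ CD D 1, ∃! i, i ∈ range (D + 1) ∧ s i ∈ P := by
    simpa only [mem_range, Nat.lt_succ_iff] using hunique
  have hdisj := pairwiseDisjoint_filter_of_existsUnique hunique'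
  have hcover := biUnion_filter_of_existsUnique hunique'
  refine ⟨hunique, fun i hi j hj => hdisj (by simpa [Nat.lt_succ_iff]) (by simpa [Nat.lt_succ_iff]),
    hcover, fun w _ hw => ?_⟩
  rw [← sum_biUnion hdisj, hcover, hw]
end

section
/- (Binary temporal partition covering lemma) Let D ∈ ℕ and n := 2^D, and let 𝒫 be any temporal partition of {1,…,n} into segments. Then there exists a binary temporal partition 𝒫' ∈ C_D such that every segment endpoint occurring in 𝒫 occurs as a segment endpoint in 𝒫' (so every segment of 𝒫 is a union of consecutive segments of 𝒫'), and |𝒫'| ≤ |𝒫|·(⌈lb n⌉ + 1) = |𝒫|·(D + 1). -/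
/-! A binary partition is built top-down: a dyadic block is kept whole when no segment of `P`
starts strictly inside it, and is halved otherwise. A block of length `2^D` containing `c` such
start points then yields at most `c·D + 1` segments: halving costs one extra segment, and it
only happens when `c ≥ 1`. End points come for free, since in a partition every end point other
than `2^D` is followed by a start point. -/

open Finset

theorem singleton_mem_CD (D t : ℕ) : {(t, t + 2 ^ D - 1)} ∈ CD D t := by
  cases D with
  | zero => simp [CD]
  | succ D => exact mem_CD_succ.2 (Or.inl rfl)

theorem union_mem_CD_succ {D t : ℕ} {P₁ P₂ : Finset (ℕ × ℕ)} (h₁ : P₁ ∈ CD D t)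
    (h₂ : P₂ ∈ CD D (t + 2 ^ D)) : P₁ ∪ P₂ ∈ CD (D + 1) t :=
  mem_CD_succ.2 (Or.inr ⟨P₁, h₁, P₂, h₂, rfl⟩)

theorem exists_fst_eq_of_mem_CD {D t : ℕ} {P : Finset (ℕ × ℕ)} (h : P ∈ CD D t) :
    ∃ s ∈ P, s.1 = t := by
  induction D generalizing t P with
  | zero => simp_all [CD]
  | succ D ih =>
    rcases mem_CD_succ.1 h with rfl | ⟨P₁, h₁, P₂, -, rfl⟩
    · simp
    · obtain ⟨s, hs, hst⟩ := ih h₁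
      exact ⟨s, mem_union_left _ hs, hst⟩

theorem exists_snd_eq_of_mem_CD {D t : ℕ} {P : Finset (ℕ × ℕ)} (h : P ∈ CD D t) :
    ∃ s ∈ P, s.2 = t + 2 ^ D - 1 := by
  induction D generalizing t P with
  | zero => simp_all [CD]
  | succ D ih =>
    rcases mem_CD_succ.1 h with rfl | ⟨P₁, -, P₂, h₂, rfl⟩
    · simp
    · obtain ⟨s, hs, hst⟩ := ih h₂
      exact ⟨s, mem_union_right _ hs, by rw [hst, pow_succ]; omega⟩

def SplitsAt (P' : Finset (ℕ × ℕ)) (b : ℕ) : Prop :=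
  (∃ s ∈ P', s.1 = b) ∧ ∃ s ∈ P', s.2 + 1 = b

theorem SplitsAt.mono {P Q : Finset (ℕ × ℕ)} {b : ℕ} (h : SplitsAt P b) (hPQ : P ⊆ Q) :
    SplitsAt Q b :=
  ⟨h.1.imp fun _ ⟨hs, hsb⟩ => ⟨hPQ hs, hsb⟩, h.2.imp fun _ ⟨hs, hsb⟩ => ⟨hPQ hs, hsb⟩⟩

theorem exists_mem_CD_splitsAt (B : Finset ℕ) (D t : ℕ) :
    ∃ P' ∈ CD D t, (∀ b ∈ B ∩ Ioo t (t + 2 ^ D), SplitsAt P' b) ∧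
      P'.card ≤ (B ∩ Ioo t (t + 2 ^ D)).card * D + 1 := by
  induction D generalizing t with
  | zero => exact ⟨{(t, t)}, by simp [CD], by simp, by simp⟩
  | succ D ih =>
    by_cases hB : B ∩ Ioo t (t + 2 ^ (D + 1)) = ∅
    · exact ⟨_, singleton_mem_CD (D + 1) t, by simp [hB], by simp⟩
    rw [pow_succ, mul_two, ← add_assoc] at hB ⊢
    obtain ⟨P₁, hP₁, hsplit₁, hcard₁⟩ := ih t
    obtain ⟨P₂, hP₂, hsplit₂, hcard₂⟩ := ih (t + 2 ^ D)
    refine ⟨P₁ ∪ P₂, union_mem_CD_succ hP₁ hP₂, fun b hb => ?_, ?_⟩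
    · simp only [mem_inter, mem_Ioo] at hb hsplit₁ hsplit₂
      obtain hb₁ | hmid | hb₂ :
          SplitsAt P₁ b ∨ b = t + 2 ^ D ∨ SplitsAt P₂ b := by
        rcases lt_trichotomy b (t + 2 ^ D) with h | h | h
        exacts [Or.inl (hsplit₁ b ⟨hb.1, hb.2.1, h⟩), Or.inr (Or.inl h),
          Or.inr (Or.inr (hsplit₂ b ⟨hb.1, h, hb.2.2⟩))]
      · exact hb₁.mono subset_union_left
      · obtain ⟨s, hs, hsb⟩ := exists_fst_eq_of_mem_CD hP₂
        obtain ⟨e, he, heb⟩ := exists_snd_eq_of_mem_CD hP₁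
        exact ⟨⟨s, mem_union_right _ hs, by omega⟩, ⟨e, mem_union_left _ he, by omega⟩⟩
      · exact hb₂.mono subset_union_right
    · have hsub : (B ∩ Ioo t (t + 2 ^ D)) ∪ (B ∩ Ioo (t + 2 ^ D) (t + 2 ^ D + 2 ^ D)) ⊆
          B ∩ Ioo t (t + 2 ^ D + 2 ^ D) := by
        intro b
        simp only [mem_union, mem_inter, mem_Ioo]
        rintro (⟨hb, h₁, h₂⟩ | ⟨hb, h₁, h₂⟩) <;> exact ⟨hb, by omega, by omega⟩
      have hdisj :
          Disjoint (B ∩ Ioo t (t + 2 ^ D)) (B ∩ Ioo (t + 2 ^ D) (t + 2 ^ D + 2 ^ D)) := by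
        rw [disjoint_left]
        simp only [mem_inter, mem_Ioo]
        omega
      have hsum := card_union_of_disjoint hdisj ▸ card_le_card hsub
      have hpos : 0 < (B ∩ Ioo t (t + 2 ^ D + 2 ^ D)).card :=
        card_pos.2 (nonempty_iff_ne_empty.2 hB)
      calc (P₁ ∪ P₂).card ≤ P₁.card + P₂.card := card_union_le _ _
        _ ≤ (B ∩ Ioo t (t + 2 ^ D + 2 ^ D)).card * (D + 1) + 1 := by nlinarith

theorem exists_fst_eq_succ_snd {N : ℕ} {P : Finset (ℕ × ℕ)}
    (hpart : ∀ i ∈ Icc 1 N, ∃! s, s ∈ P ∧ s.1 ≤ i ∧ i ≤ s.2) {s : ℕ × ℕ} (hs : s ∈ P)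
    (hs₁ : 1 ≤ s.1) (hs₁₂ : s.1 ≤ s.2) (hs₂ : s.2 < N) : ∃ u ∈ P, u.1 = s.2 + 1 := by
  obtain ⟨u, ⟨hu, hu₁, hu₂⟩, -⟩ := hpart (s.2 + 1) (mem_Icc.2 ⟨by omega, hs₂⟩)
  refine ⟨u, hu, le_antisymm hu₁ (not_lt.1 fun hlt => ?_)⟩
  obtain ⟨v, -, hv⟩ := hpart s.2 (mem_Icc.2 ⟨by omega, hs₂.le⟩)
  have hus : u = s := (hv u ⟨hu, by omega, by omega⟩).trans (hv s ⟨hs, hs₁₂, le_rfl⟩).symm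
  rw [hus] at hu₂
  omega

/-- **Binary temporal partition covering lemma.** Let `n := 2^D` and let `P` be any temporal
partition of `{1,…,n}` into segments.  Then there is a binary temporal partition `P' ∈ C_D`
such that every segment endpoint occurring in `P` occurs as a segment endpoint in `P'`, and
`|P'| ≤ |P|·(⌈lb n⌉ + 1) = |P|·(D + 1)`. -/
theorem binary_partition_covering (D : ℕ) (P : Finset (ℕ × ℕ))
    (hseg : ∀ s ∈ P, 1 ≤ s.1 ∧ s.1 ≤ s.2 ∧ s.2 ≤ 2 ^ D)
    (hpart : ∀ i ∈ Finset.Icc 1 (2 ^ D), ∃! s, s ∈ P ∧ s.1 ≤ i ∧ i ≤ s.2) :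
    ∃ P' ∈ CD D 1,
      (∀ s ∈ P, (∃ s' ∈ P', s'.1 = s.1) ∧ (∃ s' ∈ P', s'.2 = s.2)) ∧
      P'.card ≤ P.card * (Nat.clog 2 (2 ^ D) + 1) ∧
      P.card * (Nat.clog 2 (2 ^ D) + 1) = P.card * (D + 1) := by
  obtain ⟨P', hP', hsplit, hcard⟩ := exists_mem_CD_splitsAt (P.image Prod.fst) D 1
  have hcut : ∀ b, (∃ u ∈ P, u.1 = b) → 1 < b → b ≤ 2 ^ D → SplitsAt P' b :=
    fun b ⟨u, hu, hub⟩ h₁ h₂ =>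
      hsplit b (mem_inter.2 ⟨mem_image.2 ⟨u, hu, hub⟩, mem_Ioo.2 ⟨h₁, by omega⟩⟩)
  refine ⟨P', hP', fun s hs => ⟨?_, ?_⟩, ?_, by rw [Nat.clog_pow 2 D one_lt_two]⟩
  · obtain ⟨h₁, h₁₂, h₂⟩ := hseg s hs
    rcases h₁.eq_or_lt with h | h
    · exact h ▸ exists_fst_eq_of_mem_CD hP'
    · exact (hcut s.1 ⟨s, hs, rfl⟩ h (h₁₂.trans h₂)).1
  · obtain ⟨h₁, h₁₂, h₂⟩ := hseg s hs
    rcases h₂.eq_or_lt with h | h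
    · obtain ⟨e, he, heq⟩ := exists_snd_eq_of_mem_CD hP'
      exact ⟨e, he, by omega⟩
    · obtain ⟨e, he, heq⟩ := (hcut (s.2 + 1) (exists_fst_eq_succ_snd hpart hs h₁ h₁₂ h)
        (by omega) h).2
      exact ⟨e, he, by omega⟩
  · obtain ⟨s, ⟨hs, -⟩, -⟩ := hpart 1 (mem_Icc.2 ⟨le_rfl, Nat.one_le_two_pow⟩)
    have hP : 0 < P.card := card_pos.2 ⟨s, hs⟩
    have hB : (P.image Prod.fst ∩ Ioo 1 (1 + 2 ^ D)).card ≤ P.card :=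
      (card_le_card inter_subset_left).trans card_image_le
    rw [Nat.clog_pow 2 D one_lt_two]
    nlinarith
end
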